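/- arXiv:1910.06405 — 4 statements merged into one kernel-verified Lean document; each statement's English description precedes it below -/
import Mathlib

section
/- Let G be a finite simple graph, let σ be a preordering of G, and let H be a subgraph of G whose vertex set contains ra(σ). Then σ-gcol(H) ≤ σ-gcol(G). -/
open scoped Classical

/-- The number of backneighbors of `v` with respect to the ordering `τ`:
neighbors of `v` in `G` that appear (strictly) before `v` in `τ`. -/
noncomputable def backDeg {V : Type*} [Fintype V] (G : SimpleGraph V)
    (τ : List V) (v : V) : ℕ :=
  (Finset.univ.filter (fun u =>
    G.Adj v u ∧ ∃ i j : Fin τ.length, i < j ∧ τ.get i = u ∧ τ.get j = v)).card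

/-- `col(G, τ)`: the maximum over all vertices `v` of
`1 +` (the number of backneighbors of `v` with respect to `τ`). -/
noncomputable def colOrd {V : Type*} [Fintype V] (G : SimpleGraph V)
    (τ : List V) : ℕ :=
  Finset.univ.sup (fun v => 1 + backDeg G τ v)

/-- The minimax value of the ordering game on `G` continued from the position
(partial ordering) `σ`, where `alice = true` means it is Alice's turn to choose
an unchosen vertex (Alice minimizes the final score `colOrd G τ`, Bob
maximizes it).  This value is the least `s` such that the player-to-move's
opponent-robust guarantee holds, i.e. the least `s` such that Alice has a
strategy from this position guaranteeing a score of at most `s`. -/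
noncomputable def gameVal {V : Type*} [Fintype V] (G : SimpleGraph V)
    (alice : Bool) (σ : List V) : ℕ :=
  if h : (Finset.univ.filter (fun v : V => v ∉ σ)).Nonempty then
    if alice then
      (Finset.univ.filter (fun v : V => v ∉ σ)).attach.inf'
        (Finset.attach_nonempty_iff.mpr h)
        (fun v => gameVal G false (σ ++ [v.1]))
    else
      (Finset.univ.filter (fun v : V => v ∉ σ)).attach.sup'
        (Finset.attach_nonempty_iff.mpr h)
        (fun v => gameVal G true (σ ++ [v.1]))
  else colOrd G σ
termination_by (Finset.univ.filter (fun v : V => v ∉ σ)).card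
decreasing_by
  all_goals {
    have hv : ↑v ∉ σ := (Finset.mem_filter.mp v.2).2
    apply Finset.card_lt_card
    constructor
    · intro u hu
      simp only [Finset.mem_filter, List.mem_append] at hu ⊢
      exact ⟨hu.1, fun h' => hu.2 (Or.inl h')⟩
    · intro hsub
      have := hsub (Finset.mem_filter.mpr ⟨Finset.mem_univ _, hv⟩)
      simp at this }

/-- The game coloring number of `G`: the value of the ordering game on `G`
with Alice moving first (also written `gcol_A`). -/
noncomputable def gcol {V : Type*} [Fintype V] (G : SimpleGraph V) : ℕ :=
  gameVal G true []

/-- The value of the Bob ordering game on `G` (Bob moves first). -/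
noncomputable def gcolB {V : Type*} [Fintype V] (G : SimpleGraph V) : ℕ :=
  gameVal G false []

/-- The `σ`-game coloring number of `G`: the value of the `σ`-preordered
ordering game, in which Alice moves first if `|σ|` is even and Bob moves
first if `|σ|` is odd. -/
noncomputable def sigmaGcol {V : Type*} [Fintype V] (G : SimpleGraph V)
    (σ : List V) : ℕ :=
  if Even σ.length then gameVal G true σ else gameVal G false σ

/-- The Alice `σ`-game coloring number: the value of the `σ`-preordered game
in which Alice moves first. -/
noncomputable def sigmaGcolA {V : Type*} [Fintype V] (G : SimpleGraph V)
    (σ : List V) : ℕ :=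
  gameVal G true σ

/-- The Bob `σ`-game coloring number: the value of the `σ`-preordered game
in which Bob moves first. -/
noncomputable def sigmaGcolB {V : Type*} [Fintype V] (G : SimpleGraph V)
    (σ : List V) : ℕ :=
  gameVal G false σ


section Aux

variable {V : Type*} [Fintype V] (G : SimpleGraph V)

/-- unchosen vertices -/
noncomputable abbrev remF (τ : List V) : Finset V := Finset.univ.filter (fun v : V => v ∉ τ)

lemma mem_remF {τ : List V} {v : V} : v ∈ remF τ ↔ v ∉ τ := by
  simp [remF]

lemma remF_append {τ : List V} {z : V} : remF (τ ++ [z]) = (remF τ).erase z := by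
  ext v
  simp only [mem_remF, Finset.mem_erase, List.mem_append, List.mem_singleton]
  tauto

lemma card_remF_append {τ : List V} {z : V} (hz : z ∉ τ) :
    (remF (τ ++ [z])).card + 1 = (remF τ).card := by
  rw [remF_append]
  exact Finset.card_erase_add_one (mem_remF.2 hz)

lemma card_remF_append_lt {τ : List V} {z : V} (hz : z ∉ τ) :
    (remF (τ ++ [z])).card < (remF τ).card := by
  have := card_remF_append (V := V) hz
  omega

/-- number of neighbors of `z` inside the list `τ` -/
noncomputable def ccount (z : V) (τ : List V) : ℕ :=
  (Finset.univ.filter (fun u => G.Adj z u ∧ u ∈ τ)).card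

/-- degree -/
noncomputable def degc (z : V) : ℕ := (Finset.univ.filter (fun u => G.Adj z u)).card

lemma ccount_mono {z : V} {τ τ' : List V} (h : ∀ v, v ∈ τ → v ∈ τ') :
    ccount G z τ ≤ ccount G z τ' := by
  apply Finset.card_le_card
  intro u hu
  simp only [Finset.mem_filter] at hu ⊢
  exact ⟨hu.1, hu.2.1, h _ hu.2.2⟩

lemma ccount_le_degc {z : V} {τ : List V} : ccount G z τ ≤ degc G z := by
  apply Finset.card_le_card
  intro u hu
  simp only [Finset.mem_filter] at hu ⊢
  exact ⟨hu.1, hu.2.1⟩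

lemma ccount_congr {z : V} {τ τ' : List V} (h : ∀ v, v ∈ τ ↔ v ∈ τ') :
    ccount G z τ = ccount G z τ' :=
  le_antisymm (ccount_mono G fun v hv => (h v).1 hv) (ccount_mono G fun v hv => (h v).2 hv)

lemma backDeg_not_mem {τ : List V} {v : V} (hv : v ∉ τ) : backDeg G τ v = 0 := by
  rw [backDeg, Finset.card_eq_zero, Finset.filter_eq_empty_iff]
  rintro u _hu ⟨-, i, j, -, -, hj⟩
  exact hv (hj ▸ τ.get_mem j)

lemma backDeg_append_ne {τ : List V} {z v : V} (hv : v ≠ z) :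
    backDeg G (τ ++ [z]) v = backDeg G τ v := by
  unfold backDeg
  congr 1
  apply Finset.filter_congr
  intro u _hu
  constructor
  · rintro ⟨ha, i, j, hij, hi, hj⟩
    refine ⟨ha, ?_⟩
    have hlen : (τ ++ [z]).length = τ.length + 1 := by simp
    have hjlt : (j : ℕ) < τ.length := by
      by_contra hcon
      have hje : (j : ℕ) = τ.length := by
        have h2 : (j : ℕ) < τ.length + 1 := by simpa using j.isLt
        omega
      apply hv
      rw [← hj]
      rw [List.get_eq_getElem]
      have : (τ ++ [z])[(j:ℕ)] = z := by
        rw [List.getElem_append_right (by omega)]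
        simp [hje]
      rw [this]
    have hilt : (i : ℕ) < τ.length := lt_trans hij hjlt
    refine ⟨⟨i, hilt⟩, ⟨j, hjlt⟩, hij, ?_, ?_⟩
    · rw [← hi]; rw [List.get_eq_getElem, List.get_eq_getElem]
      exact (List.getElem_append_left hilt).symm
    · rw [← hj]; rw [List.get_eq_getElem, List.get_eq_getElem]
      exact (List.getElem_append_left hjlt).symm
  · rintro ⟨ha, i, j, hij, hi, hj⟩
    refine ⟨ha, ?_⟩
    have hlen : (τ ++ [z]).length = τ.length + 1 := by simp
    refine ⟨⟨i, by rw [hlen]; omega⟩, ⟨j, by rw [hlen]; omega⟩, hij, ?_, ?_⟩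
    · rw [← hi]; rw [List.get_eq_getElem, List.get_eq_getElem]
      exact List.getElem_append_left i.isLt
    · rw [← hj]; rw [List.get_eq_getElem, List.get_eq_getElem]
      exact List.getElem_append_left j.isLt

lemma backDeg_append_self {τ : List V} {z : V} (hz : z ∉ τ) :
    backDeg G (τ ++ [z]) z = ccount G z τ := by
  unfold backDeg ccount
  congr 1
  apply Finset.filter_congr
  intro u _hu
  have hlen : (τ ++ [z]).length = τ.length + 1 := by simp
  constructor
  · rintro ⟨ha, i, j, hij, hi, hj⟩
    refine ⟨ha, ?_⟩
    have hilt : (i : ℕ) < τ.length := by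
      by_contra hcon
      have hie : (i : ℕ) = τ.length := by
        have h2 : (i : ℕ) < τ.length + 1 := by simpa using i.isLt
        omega
      have h3 : (j : ℕ) < τ.length + 1 := by simpa using j.isLt
      omega
    rw [← hi, List.get_eq_getElem, List.getElem_append_left hilt]
    exact List.getElem_mem _
  · rintro ⟨ha, hu⟩
    obtain ⟨i, hi⟩ := List.mem_iff_get.1 hu
    refine ⟨ha, ⟨i, by rw [hlen]; omega⟩, ⟨τ.length, by rw [hlen]; omega⟩,
      by rw [Fin.lt_def]; exact i.isLt, ?_, ?_⟩
    · rw [← hi, List.get_eq_getElem, List.get_eq_getElem]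
      exact List.getElem_append_left i.isLt
    · rw [List.get_eq_getElem]
      rw [List.getElem_append_right (by simp)]
      simp

lemma le_colOrd (τ : List V) (v : V) : 1 + backDeg G τ v ≤ colOrd G τ := by
  unfold colOrd
  exact Finset.le_sup (f := fun u => 1 + backDeg G τ u) (Finset.mem_univ v)

lemma colOrd_le_of {τ : List V} {M : ℕ} (h : ∀ v, 1 + backDeg G τ v ≤ M) :
    colOrd G τ ≤ M := by
  unfold colOrd; exact Finset.sup_le (fun v _ => h v)

lemma colOrd_append {τ : List V} {z : V} (hz : z ∉ τ) :
    colOrd G (τ ++ [z]) = max (colOrd G τ) (1 + ccount G z τ) := by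
  apply le_antisymm
  · apply colOrd_le_of
    intro v
    by_cases hv : v = z
    · subst hv
      rw [backDeg_append_self G hz]
      exact le_max_right _ _
    · rw [backDeg_append_ne G hv]
      exact le_trans (le_colOrd G τ v) (le_max_left _ _)
  · apply max_le
    · apply colOrd_le_of
      intro v
      by_cases hv : v = z
      · rw [hv, backDeg_not_mem G hz]
        calc 1 + 0 ≤ 1 + backDeg G (τ ++ [z]) z := by omega
        _ ≤ _ := le_colOrd G _ z
      · calc 1 + backDeg G τ v = 1 + backDeg G (τ ++ [z]) v := by rw [backDeg_append_ne G hv]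
        _ ≤ _ := le_colOrd G _ v
    · calc 1 + ccount G z τ = 1 + backDeg G (τ ++ [z]) z := by rw [backDeg_append_self G hz]
      _ ≤ _ := le_colOrd G _ z

lemma colOrd_le_append {τ : List V} {z : V} (hz : z ∉ τ) :
    colOrd G τ ≤ colOrd G (τ ++ [z]) := by
  rw [colOrd_append G hz]; exact le_max_left _ _

lemma gameVal_terminal {τ : List V} (h : ¬ (remF (V := V) τ).Nonempty) (b : Bool) :
    gameVal G b τ = colOrd G τ := by
  rw [gameVal, dif_neg h]

lemma gameVal_true_le {τ : List V} {z : V} (hz : z ∈ remF (V := V) τ) :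
    gameVal G true τ ≤ gameVal G false (τ ++ [z]) := by
  have hne : (remF (V := V) τ).Nonempty := ⟨z, hz⟩
  rw [gameVal, dif_pos hne, if_pos rfl]
  exact Finset.inf'_le (f := fun v : {x // x ∈ remF (V := V) τ} =>
    gameVal G false (τ ++ [v.1])) (Finset.mem_attach _ ⟨z, hz⟩)

lemma le_gameVal_false {τ : List V} {z : V} (hz : z ∈ remF (V := V) τ) :
    gameVal G true (τ ++ [z]) ≤ gameVal G false τ := by
  have hne : (remF (V := V) τ).Nonempty := ⟨z, hz⟩
  conv_rhs => rw [gameVal, dif_pos hne, if_neg (by simp)]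
  exact Finset.le_sup' (f := fun v : {x // x ∈ remF (V := V) τ} =>
    gameVal G true (τ ++ [v.1])) (Finset.mem_attach _ ⟨z, hz⟩)

lemma gameVal_false_le {τ : List V} {M : ℕ} (hne : (remF (V := V) τ).Nonempty)
    (h : ∀ z ∈ remF (V := V) τ, gameVal G true (τ ++ [z]) ≤ M) :
    gameVal G false τ ≤ M := by
  rw [gameVal, dif_pos hne, if_neg (by simp)]
  apply Finset.sup'_le
  rintro ⟨z, hz⟩ -
  exact h z hz

lemma le_gameVal_true {τ : List V} {M : ℕ} (hne : (remF (V := V) τ).Nonempty)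
    (h : ∀ z ∈ remF (V := V) τ, M ≤ gameVal G false (τ ++ [z])) :
    M ≤ gameVal G true τ := by
  rw [gameVal, dif_pos hne, if_pos rfl]
  apply Finset.le_inf'
  rintro ⟨z, hz⟩ -
  exact h z hz

lemma exists_opt_move {τ : List V} (hne : (remF (V := V) τ).Nonempty) :
    ∃ z ∈ remF (V := V) τ, gameVal G true τ = gameVal G false (τ ++ [z]) := by
  rw [gameVal, dif_pos hne, if_pos rfl]
  obtain ⟨⟨z, hz⟩, -, heq⟩ :=
    Finset.exists_mem_eq_inf' (Finset.attach_nonempty_iff.mpr hne)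
      (fun v : {x // x ∈ remF (V := V) τ} => gameVal G false (τ ++ [v.1]))
  exact ⟨z, hz, heq⟩

lemma colOrd_le_gameVal : ∀ (n : ℕ) (τ : List V), (remF (V := V) τ).card = n →
    ∀ b, colOrd G τ ≤ gameVal G b τ := by
  intro n
  induction n using Nat.strong_induction_on with
  | _ n ih =>
    intro τ hcard b
    by_cases hne : (remF (V := V) τ).Nonempty
    · have step : ∀ z ∈ remF (V := V) τ, ∀ b', colOrd G (τ ++ [z]) ≤ gameVal G b' (τ ++ [z]) := by
        intro z hz b'
        have hzτ : z ∉ τ := mem_remF.1 hz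
        exact ih _ (by rw [← hcard]; exact card_remF_append_lt hzτ) _ rfl b'
      cases b
      · obtain ⟨z, hz⟩ := hne
        calc colOrd G τ ≤ colOrd G (τ ++ [z]) := colOrd_le_append G (mem_remF.1 hz)
        _ ≤ gameVal G true (τ ++ [z]) := step z hz true
        _ ≤ gameVal G false τ := le_gameVal_false G hz
      · apply le_gameVal_true G hne
        intro z hz
        calc colOrd G τ ≤ colOrd G (τ ++ [z]) := colOrd_le_append G (mem_remF.1 hz)
        _ ≤ gameVal G false (τ ++ [z]) := step z hz false
    · rw [gameVal_terminal G hne]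

lemma colOrd_le_gameVal' (b : Bool) (τ : List V) : colOrd G τ ≤ gameVal G b τ :=
  colOrd_le_gameVal G _ τ rfl b

lemma remF_congr {τ τ' : List V} (h : ∀ v, v ∈ τ ↔ v ∈ τ') :
    remF (V := V) τ = remF (V := V) τ' := by
  ext v
  simp only [mem_remF]
  exact not_congr (h v)

lemma sameset_le : ∀ (n : ℕ) (τ τ' : List V) (b : Bool), (remF (V := V) τ).card = n →
    (∀ v, v ∈ τ ↔ v ∈ τ') →
    gameVal G b τ ≤ max (colOrd G τ) (gameVal G b τ') := by
  intro n
  induction n using Nat.strong_induction_on with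
  | _ n ih =>
    intro τ τ' b hcard hiff
    have hrem : remF (V := V) τ = remF (V := V) τ' := remF_congr hiff
    by_cases hne : (remF (V := V) τ).Nonempty
    · cases b
      · -- Bob to move
        apply gameVal_false_le G hne
        intro y hy
        have hyτ : y ∉ τ := mem_remF.1 hy
        have hy' : y ∈ remF (V := V) τ' := hrem ▸ hy
        have hiff' : ∀ v, v ∈ τ ++ [y] ↔ v ∈ τ' ++ [y] := by
          intro v; simp [hiff v]
        have hcard' : (remF (V := V) (τ ++ [y])).card < n :=
          hcard ▸ card_remF_append_lt hyτ
        calc gameVal G true (τ ++ [y])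
            ≤ max (colOrd G (τ ++ [y])) (gameVal G true (τ' ++ [y])) :=
              ih _ hcard' _ _ _ rfl hiff'
        _ ≤ max (colOrd G τ) (gameVal G false τ') := by
            have h1 : gameVal G true (τ' ++ [y]) ≤ gameVal G false τ' :=
              le_gameVal_false G hy'
            have h2 : 1 + ccount G y τ ≤ gameVal G false τ' := by
              rw [ccount_congr G hiff]
              calc 1 + ccount G y τ' ≤ colOrd G (τ' ++ [y]) := by
                    rw [colOrd_append G (mem_remF.1 hy')]; exact le_max_right _ _
              _ ≤ gameVal G true (τ' ++ [y]) := colOrd_le_gameVal' G _ _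
              _ ≤ gameVal G false τ' := h1
            rw [colOrd_append G hyτ]
            apply max_le
            · apply max_le
              · exact le_max_left _ _
              · exact le_trans h2 (le_max_right _ _)
            · exact le_trans h1 (le_max_right _ _)
      · -- Alice to move
        have hne' : (remF (V := V) τ').Nonempty := hrem ▸ hne
        obtain ⟨α, hα', heq⟩ := exists_opt_move G hne'
        have hα : α ∈ remF (V := V) τ := hrem ▸ hα'
        have hiff' : ∀ v, v ∈ τ ++ [α] ↔ v ∈ τ' ++ [α] := by
          intro v; simp [hiff v]
        have hcard' : (remF (V := V) (τ ++ [α])).card < n :=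
          hcard ▸ card_remF_append_lt (mem_remF.1 hα)
        calc gameVal G true τ ≤ gameVal G false (τ ++ [α]) := gameVal_true_le G hα
        _ ≤ max (colOrd G (τ ++ [α])) (gameVal G false (τ' ++ [α])) :=
            ih _ hcard' _ _ _ rfl hiff'
        _ ≤ max (colOrd G τ) (gameVal G true τ') := by
            rw [heq]
            have h2 : 1 + ccount G α τ ≤ gameVal G false (τ' ++ [α]) := by
              rw [ccount_congr G hiff]
              calc 1 + ccount G α τ' ≤ colOrd G (τ' ++ [α]) := by
                    rw [colOrd_append G (mem_remF.1 hα')]; exact le_max_right _ _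
              _ ≤ gameVal G false (τ' ++ [α]) := colOrd_le_gameVal' G _ _
            rw [colOrd_append G (mem_remF.1 hα)]
            apply max_le
            · apply max_le
              · exact le_max_left _ _
              · exact le_trans h2 (le_max_right _ _)
            · exact le_max_right _ _
    · rw [gameVal_terminal G hne]
      exact le_max_left _ _

lemma lb_degc : ∀ (n : ℕ) (τ : List V) (b : Bool), (remF (V := V) τ).card = n →
    ∀ β ∈ remF (V := V) τ, (∀ v ∈ remF (V := V) τ, degc G β ≤ degc G v) →
    1 + degc G β ≤ gameVal G b τ := by
  intro n
  induction n using Nat.strong_induction_on with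
  | _ n ih =>
    intro τ b hcard β hβ hmin
    have hne : (remF (V := V) τ).Nonempty := ⟨β, hβ⟩
    have child : ∀ z ∈ remF (V := V) τ, ∀ b', 1 + degc G β ≤ gameVal G b' (τ ++ [z]) := by
      intro z hz b'
      have hzτ : z ∉ τ := mem_remF.1 hz
      by_cases h2 : (remF (V := V) (τ ++ [z])).Nonempty
      · obtain ⟨β', hβ', hmin'⟩ := Finset.exists_min_image (remF (V := V) (τ ++ [z])) (degc G) h2
        have hβ'τ : β' ∈ remF (V := V) τ := by
          rw [remF_append] at hβ'
          exact Finset.mem_of_mem_erase hβ'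
        calc 1 + degc G β ≤ 1 + degc G β' := by
              have := hmin β' hβ'τ; omega
        _ ≤ gameVal G b' (τ ++ [z]) :=
            ih _ (hcard ▸ card_remF_append_lt hzτ) _ _ rfl β' hβ' hmin'
      · rw [gameVal_terminal G h2]
        have hfull : ∀ u, G.Adj z u → u ∈ τ := by
          intro u hadj
          have hu : u ∈ τ ++ [z] := by
            by_contra hcon
            exact h2 ⟨u, mem_remF.2 hcon⟩
          rcases List.mem_append.1 hu with h | h
          · exact h
          · exact absurd (List.mem_singleton.1 h).symm (G.ne_of_adj hadj)
        have hcc : ccount G z τ = degc G z := by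
          unfold ccount degc
          congr 1
          apply Finset.filter_congr
          intro u _
          exact ⟨fun h => h.1, fun h => ⟨h, hfull u h⟩⟩
        calc 1 + degc G β ≤ 1 + degc G z := by have := hmin z hz; omega
        _ = 1 + ccount G z τ := by rw [hcc]
        _ ≤ colOrd G (τ ++ [z]) := by
            rw [colOrd_append G hzτ]; exact le_max_right _ _
    cases b
    · obtain ⟨z, hz⟩ := hne
      exact le_trans (child z hz true) (le_gameVal_false G hz)
    · apply le_gameVal_true G hne
      intro z hz
      exact child z hz false

lemma not_mem_app {a b : V} {l : List V} (h1 : a ∉ l) (h2 : a ≠ b) : a ∉ l ++ [b] := by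
  simp [List.mem_append, h1, h2]

lemma pass_main : ∀ (n : ℕ) (τ : List V), (remF (V := V) τ).card = n →
    ((∀ β, β ∉ τ → gameVal G true τ ≤ max (gameVal G true (τ ++ [β])) (1 + degc G β)) ∧
     gameVal G true τ ≤ gameVal G false τ) := by
  intro n
  induction n using Nat.strong_induction_on with
  | _ n ih =>
    intro τ hcard
    have hA : ∀ β, β ∉ τ → gameVal G true τ ≤ max (gameVal G true (τ ++ [β])) (1 + degc G β) := by
      intro β hβτ
      have hβ : β ∈ remF (V := V) τ := mem_remF.2 hβτ
      by_cases h2 : (remF (V := V) (τ ++ [β])).Nonempty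
      · obtain ⟨α, hα2, heq⟩ := exists_opt_move G h2
        have hαβ : α ∉ τ ++ [β] := mem_remF.1 hα2
        have hατ : α ∉ τ := fun h => hαβ (List.mem_append.2 (Or.inl h))
        have hαneβ : α ≠ β := fun h => hαβ (by simp [h])
        have hα : α ∈ remF (V := V) τ := mem_remF.2 hατ
        have hβτα : β ∉ τ ++ [α] := not_mem_app hβτ (Ne.symm hαneβ)
        have hneα : (remF (V := V) (τ ++ [α])).Nonempty := ⟨β, mem_remF.2 hβτα⟩
        refine le_trans (gameVal_true_le G hα) ?_
        rw [heq]
        apply gameVal_false_le G hneα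
        intro y hy
        have hyταa : y ∉ τ ++ [α] := mem_remF.1 hy
        have hyτ : y ∉ τ := fun h => hyταa (by simp [h])
        have hyα : y ≠ α := fun h => hyταa (by simp [h])
        have hcard2 : (remF (V := V) ((τ ++ [β]) ++ [α])).card < n := by
          have l1 := card_remF_append_lt (V := V) (τ := τ ++ [β]) (z := α) hαβ
          have l2 := card_remF_append_lt (V := V) (τ := τ) (z := β) hβτ
          omega
        by_cases hyβ : y = β
        · subst hyβ
          have hiffs : ∀ v, v ∈ (τ ++ [α]) ++ [y] ↔ v ∈ (τ ++ [y]) ++ [α] := by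
            intro v; simp [List.mem_append]; tauto
          calc gameVal G true ((τ ++ [α]) ++ [y])
              ≤ max (colOrd G ((τ ++ [α]) ++ [y])) (gameVal G true ((τ ++ [y]) ++ [α])) :=
                sameset_le G _ _ _ _ rfl hiffs
          _ ≤ max (gameVal G false ((τ ++ [y]) ++ [α])) (1 + degc G y) := by
              apply max_le
              · rw [colOrd_append G hβτα, colOrd_append G hατ]
                have c1 : colOrd G τ ≤ gameVal G false ((τ ++ [y]) ++ [α]) :=
                  le_trans (le_trans (colOrd_le_append G hβτ) (colOrd_le_append G hαβ))
                    (colOrd_le_gameVal' G _ _)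
                have c2 : 1 + ccount G α τ ≤ gameVal G false ((τ ++ [y]) ++ [α]) := by
                  have m1 : ccount G α τ ≤ ccount G α (τ ++ [y]) :=
                    ccount_mono G (fun v hv => by simp [hv])
                  have m2 : 1 + ccount G α (τ ++ [y]) ≤ colOrd G ((τ ++ [y]) ++ [α]) := by
                    rw [colOrd_append G hαβ]; exact le_max_right _ _
                  have m3 := colOrd_le_gameVal' G false ((τ ++ [y]) ++ [α])
                  omega
                have c3 : 1 + ccount G y (τ ++ [α]) ≤ 1 + degc G y := by
                  have := ccount_le_degc G (z := y) (τ := τ ++ [α]); omega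
                apply max_le
                · apply max_le
                  · exact le_trans c1 (le_max_left _ _)
                  · exact le_trans c2 (le_max_left _ _)
                · exact le_trans c3 (le_max_right _ _)
              · exact le_trans ((ih _ hcard2 _ rfl).2) (le_max_left _ _)
        · have hβ2 : β ∉ (τ ++ [α]) ++ [y] :=
            not_mem_app hβτα (Ne.symm hyβ)
          have hcard3 : (remF (V := V) ((τ ++ [α]) ++ [y])).card < n := by
            have l1 := card_remF_append_lt (V := V) (τ := τ ++ [α]) (z := y) hyταa
            have l2 := card_remF_append_lt (V := V) (τ := τ) (z := α) hατ
            omega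
          have hIH := (ih _ hcard3 _ rfl).1 β hβ2
          refine le_trans hIH (max_le ?_ (le_max_right _ _))
          have hyβα : y ∉ (τ ++ [β]) ++ [α] :=
            not_mem_app (not_mem_app hyτ hyβ) hyα
          have hiffs : ∀ v, v ∈ ((τ ++ [α]) ++ [y]) ++ [β] ↔ v ∈ ((τ ++ [β]) ++ [α]) ++ [y] := by
            intro v; simp [List.mem_append]; tauto
          calc gameVal G true (((τ ++ [α]) ++ [y]) ++ [β])
              ≤ max (colOrd G (((τ ++ [α]) ++ [y]) ++ [β]))
                  (gameVal G true (((τ ++ [β]) ++ [α]) ++ [y])) :=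
                sameset_le G _ _ _ _ rfl hiffs
          _ ≤ max (gameVal G false ((τ ++ [β]) ++ [α])) (1 + degc G β) := by
              have hgv : gameVal G true (((τ ++ [β]) ++ [α]) ++ [y])
                  ≤ gameVal G false ((τ ++ [β]) ++ [α]) :=
                le_gameVal_false G (mem_remF.2 hyβα)
              apply max_le
              · rw [colOrd_append G hβ2, colOrd_append G hyταa, colOrd_append G hατ]
                have c1 : colOrd G τ ≤ gameVal G false ((τ ++ [β]) ++ [α]) :=
                  le_trans (le_trans (colOrd_le_append G hβτ) (colOrd_le_append G hαβ))
                    (colOrd_le_gameVal' G _ _)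
                have c2 : 1 + ccount G α τ ≤ gameVal G false ((τ ++ [β]) ++ [α]) := by
                  have m1 : ccount G α τ ≤ ccount G α (τ ++ [β]) :=
                    ccount_mono G (fun v hv => by simp [hv])
                  have m2 : 1 + ccount G α (τ ++ [β]) ≤ colOrd G ((τ ++ [β]) ++ [α]) := by
                    rw [colOrd_append G hαβ]; exact le_max_right _ _
                  have m3 := colOrd_le_gameVal' G false ((τ ++ [β]) ++ [α])
                  omega
                have c3 : 1 + ccount G y (τ ++ [α]) ≤ gameVal G false ((τ ++ [β]) ++ [α]) := by
                  have m1 : ccount G y (τ ++ [α]) ≤ ccount G y ((τ ++ [β]) ++ [α]) :=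
                    ccount_mono G (fun v hv => by
                      simp only [List.mem_append, List.mem_singleton] at hv ⊢; tauto)
                  have m2 : 1 + ccount G y ((τ ++ [β]) ++ [α]) ≤
                      colOrd G (((τ ++ [β]) ++ [α]) ++ [y]) := by
                    rw [colOrd_append G hyβα]; exact le_max_right _ _
                  have m3 := colOrd_le_gameVal' G true ((((τ ++ [β]) ++ [α]) ++ [y]))
                  omega
                have c4 : 1 + ccount G β ((τ ++ [α]) ++ [y]) ≤ 1 + degc G β := by
                  have := ccount_le_degc G (z := β) (τ := (τ ++ [α]) ++ [y]); omega
                apply max_le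
                · apply max_le
                  · apply max_le
                    · exact le_trans c1 (le_max_left _ _)
                    · exact le_trans c2 (le_max_left _ _)
                  · exact le_trans c3 (le_max_left _ _)
                · exact le_trans c4 (le_max_right _ _)
              · exact le_trans hgv (le_max_left _ _)
      · calc gameVal G true τ ≤ gameVal G false (τ ++ [β]) := gameVal_true_le G hβ
        _ = colOrd G (τ ++ [β]) := gameVal_terminal G h2 false
        _ = gameVal G true (τ ++ [β]) := (gameVal_terminal G h2 true).symm
        _ ≤ _ := le_max_left _ _
    refine ⟨hA, ?_⟩
    by_cases hne : (remF (V := V) τ).Nonempty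
    · obtain ⟨β, hβ, hmin⟩ := Finset.exists_min_image (remF (V := V) τ) (degc G) hne
      refine le_trans (hA β (mem_remF.1 hβ)) (max_le ?_ ?_)
      · exact le_gameVal_false G hβ
      · exact lb_degc G _ τ false rfl β hβ hmin
    · rw [gameVal_terminal G hne true, gameVal_terminal G hne false]

lemma pass (τ : List V) : gameVal G true τ ≤ gameVal G false τ :=
  (pass_main G _ τ rfl).2

end Aux

section Sub

variable {V : Type*} [Fintype V] (G : SimpleGraph V) (H : G.Subgraph) [Fintype ↥H.verts]

lemma dom_colOrd : ∀ (τG : List V), τG.Nodup → ∀ (τH : List ↥H.verts),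
    τH.map Subtype.val = τG.filter (fun v => decide (v ∈ H.verts)) →
    colOrd H.coe τH ≤ colOrd G τG := by
  intro τG
  induction τG using List.reverseRecOn with
  | nil =>
    intro _ τH hmap
    have hτH : τH = [] := by
      have := congrArg List.length hmap
      simpa using this
    subst hτH
    apply colOrd_le_of
    intro w
    calc 1 + backDeg H.coe [] w = 1 + backDeg G [] (↑w : V) := by
          rw [backDeg_not_mem _ (by simp), backDeg_not_mem _ (by simp)]
    _ ≤ colOrd G [] := le_colOrd G [] _
  | append_singleton ρ x ihρ =>
    intro hnodup τH hmap
    have hnρ : ρ.Nodup := (List.nodup_append.1 hnodup).1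
    have hxρ : x ∉ ρ := by
      have := (List.nodup_append.1 hnodup).2.2
      intro hmem
      exact this x hmem x (by simp) rfl
    rw [List.filter_append] at hmap
    by_cases hxH : x ∈ H.verts
    · have hfx : (([x] : List V).filter (fun v => decide (v ∈ H.verts))) = [x] := by
        simp [hxH]
      rw [hfx] at hmap
      induction τH using List.reverseRecOn with
      | nil =>
        exfalso
        have := congrArg List.length hmap
        simp at this
      | append_singleton τH' w _ =>
        rw [List.map_append] at hmap
        obtain ⟨hm, hw⟩ := List.append_inj' hmap (by simp)
        have hwx : (↑w : V) = x := by simpa using hw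
        have hwρ : w ∉ τH' := by
          intro hmem
          apply hxρ
          have h1 : (↑w : V) ∈ List.map Subtype.val τH' := List.mem_map_of_mem hmem
          rw [hm] at h1
          rw [← hwx]
          exact (List.mem_filter.1 h1).1
        rw [colOrd_append H.coe hwρ, colOrd_append G hxρ]
        apply max_le
        · exact le_trans (ihρ hnρ τH' hm) (le_max_left _ _)
        · have hcc : ccount H.coe w τH' ≤ ccount G x ρ := by
            unfold ccount
            refine Finset.card_le_card_of_injOn (fun u => (↑u : V)) ?_ ?_
            · intro u hu
              simp only [Finset.mem_coe, Finset.mem_filter, Finset.mem_univ, true_and] at hu ⊢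
              obtain ⟨hadj, humem⟩ := hu
              constructor
              · have hA : H.Adj ↑w ↑u := hadj
                have hG : G.Adj ↑w ↑u := hA.adj_sub
                rwa [hwx] at hG
              · have h1 : (↑u : V) ∈ List.map Subtype.val τH' := List.mem_map_of_mem humem
                rw [hm] at h1
                exact (List.mem_filter.1 h1).1
            · intro a _ b _ hab
              exact Subtype.ext hab
          omega
    · have hfx : (([x] : List V).filter (fun v => decide (v ∈ H.verts))) = [] := by
        simp [hxH]
      rw [hfx, List.append_nil] at hmap
      exact le_trans (ihρ hnρ τH hmap) (colOrd_le_append G hxρ)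

end Sub

section Sub2

variable {V : Type*} [Fintype V] (G : SimpleGraph V) (H : G.Subgraph) [Fintype ↥H.verts]

lemma main_mono : ∀ (n : ℕ) (τG : List V) (τH : List ↥H.verts), τG.Nodup →
    τH.map Subtype.val = τG.filter (fun v => decide (v ∈ H.verts)) →
    (remF (V := V) τG).card = n →
    ∀ b, gameVal H.coe b τH ≤ gameVal G b τG := by
  intro n
  induction n using Nat.strong_induction_on with
  | _ n ih =>
    intro τG τH hnodup hmap hcard b
    have M1 : ∀ w : ↥H.verts, w ∈ τH ↔ (↑w : V) ∈ τG := by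
      intro w
      constructor
      · intro hw
        have h1 : (↑w : V) ∈ List.map Subtype.val τH := List.mem_map_of_mem hw
        rw [hmap] at h1
        exact (List.mem_filter.1 h1).1
      · intro hw
        have h1 : (↑w : V) ∈ τG.filter (fun v => decide (v ∈ H.verts)) :=
          List.mem_filter.2 ⟨hw, by simp [w.2]⟩
        rw [← hmap] at h1
        obtain ⟨a, ha, hav⟩ := List.mem_map.1 h1
        rwa [show a = w from Subtype.ext hav] at ha
    have hGH : ∀ (x : V) (hx : x ∈ H.verts), x ∉ τG → (⟨x, hx⟩ : ↥H.verts) ∉ τH := by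
      intro x hx hxτG hmem
      exact hxτG ((M1 ⟨x, hx⟩).1 hmem)
    have hnodup_app : ∀ x : V, x ∉ τG → (τG ++ [x]).Nodup := by
      intro x hx
      rw [List.nodup_append]
      exact ⟨hnodup, List.nodup_singleton x,
        fun a ha b hb hab => by subst hab; rw [List.mem_singleton] at hb; subst hb; exact hx ha⟩
    have relapp_in : ∀ (x : V) (hx : x ∈ H.verts),
        (τH ++ [(⟨x, hx⟩ : ↥H.verts)]).map Subtype.val =
          (τG ++ [x]).filter (fun v => decide (v ∈ H.verts)) := by
      intro x hx
      rw [List.map_append, List.filter_append, hmap]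
      simp [hx]
    have relapp_out : ∀ x : V, x ∉ H.verts →
        τH.map Subtype.val = (τG ++ [x]).filter (fun v => decide (v ∈ H.verts)) := by
      intro x hx
      rw [List.filter_append, hmap]
      simp [hx]
    by_cases hGne : (remF (V := V) τG).Nonempty
    · cases b
      · -- Bob to move
        by_cases hHne : (remF (V := ↥H.verts) τH).Nonempty
        · apply gameVal_false_le H.coe hHne
          intro w hw
          have hwτH : w ∉ τH := mem_remF.1 hw
          have hwτG : (↑w : V) ∉ τG := fun hmem => hwτH ((M1 w).2 hmem)
          have hcard' : (remF (V := V) (τG ++ [(↑w : V)])).card < n :=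
            hcard ▸ card_remF_append_lt hwτG
          have hmap' := relapp_in (↑w : V) w.2
          calc gameVal H.coe true (τH ++ [w])
              ≤ gameVal G true (τG ++ [(↑w : V)]) := by
                have := ih _ hcard' (τG ++ [(↑w : V)]) (τH ++ [w]) (hnodup_app _ hwτG)
                  (by simpa using hmap') rfl true
                exact this
          _ ≤ gameVal G false τG := le_gameVal_false G (mem_remF.2 hwτG)
        · rw [gameVal_terminal H.coe hHne]
          obtain ⟨x, hx⟩ := hGne
          have hxτG : x ∉ τG := mem_remF.1 hx
          have hxH : x ∉ H.verts := by
            by_contra hmem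
            exact hHne ⟨⟨x, hmem⟩, mem_remF.2 (hGH x hmem hxτG)⟩
          have hcard' : (remF (V := V) (τG ++ [x])).card < n :=
            hcard ▸ card_remF_append_lt hxτG
          calc colOrd H.coe τH = gameVal H.coe true τH :=
              (gameVal_terminal H.coe hHne true).symm
          _ ≤ gameVal G true (τG ++ [x]) :=
              ih _ hcard' _ _ (hnodup_app _ hxτG) (relapp_out x hxH) rfl true
          _ ≤ gameVal G false τG := le_gameVal_false G hx
      · -- Alice to move
        apply le_gameVal_true G hGne
        intro x hxrem
        have hxτG : x ∉ τG := mem_remF.1 hxrem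
        have hcard' : (remF (V := V) (τG ++ [x])).card < n :=
          hcard ▸ card_remF_append_lt hxτG
        by_cases hxH : x ∈ H.verts
        · have hwnot : (⟨x, hxH⟩ : ↥H.verts) ∉ τH := hGH x hxH hxτG
          calc gameVal H.coe true τH
              ≤ gameVal H.coe false (τH ++ [⟨x, hxH⟩]) :=
                gameVal_true_le H.coe (mem_remF.2 hwnot)
          _ ≤ gameVal G false (τG ++ [x]) :=
              ih _ hcard' _ _ (hnodup_app _ hxτG) (relapp_in x hxH) rfl false
        · calc gameVal H.coe true τH
              ≤ gameVal G true (τG ++ [x]) :=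
                ih _ hcard' _ _ (hnodup_app _ hxτG) (relapp_out x hxH) rfl true
          _ ≤ gameVal G false (τG ++ [x]) := pass G _
    · have hHemp : ¬ (remF (V := ↥H.verts) τH).Nonempty := by
        rintro ⟨w, hw⟩
        exact hGne ⟨↑w, mem_remF.2 (fun hmem => (mem_remF.1 hw) ((M1 w).2 hmem))⟩
      rw [gameVal_terminal _ hGne, gameVal_terminal _ hHemp]
      exact dom_colOrd G H τG hnodup τH hmap

end Sub2

/-- If `σ` is a preordering of `G` (a list of distinct vertices)
and `H` is a subgraph of `G` whose vertex set contains `ra(σ)`, then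
`σ-gcol(H) ≤ σ-gcol(G)`. -/
theorem sigmaGcol_subgraph_le {V : Type*} [Fintype V] (G : SimpleGraph V)
    (H : G.Subgraph) (σ : List V) (hnodup : σ.Nodup)
    (hra : ∀ v ∈ σ, v ∈ H.verts) :
    sigmaGcol H.coe (σ.pmap (fun v hv => (⟨v, hv⟩ : H.verts)) hra) ≤
      sigmaGcol G σ := by
  have h1 : (σ.pmap (fun v hv => (⟨v, hv⟩ : H.verts)) hra).map Subtype.val = σ := by
    rw [List.map_pmap]
    simp
  have h2 : σ.filter (fun v => decide (v ∈ H.verts)) = σ :=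
    List.filter_eq_self.2 (fun a ha => by simp [hra a ha])
  have hmap : (σ.pmap (fun v hv => (⟨v, hv⟩ : H.verts)) hra).map Subtype.val
      = σ.filter (fun v => decide (v ∈ H.verts)) := by rw [h1, h2]
  have hlen : (σ.pmap (fun v hv => (⟨v, hv⟩ : H.verts)) hra).length = σ.length :=
    List.length_pmap
  unfold sigmaGcol
  rw [hlen]
  by_cases hev : Even σ.length
  · rw [if_pos hev, if_pos hev]
    exact main_mono G H _ σ _ hnodup hmap rfl true
  · rw [if_neg hev, if_neg hev]
    exact main_mono G H _ σ _ hnodup hmap rfl false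
end

section
/- Let G be a finite simple graph, let σ be a preordering of G of odd length m, and let H be a subgraph of G whose vertex set contains ra(σ). Then σ-gcol_A(H) ≤ σ-gcol_A(G). -/
open scoped Classical

namespace OrdGame

open List

variable {V : Type*} [Fintype V]

lemma pair_sublist_of_lt {l : List V} {i j : Fin l.length} (hij : i < j) :
    [l.get i, l.get j] <+ l := by
  have h : ([i, j] : List (Fin l.length)).Pairwise (· < ·) := by
    simp [List.pairwise_cons, hij]
  simpa using List.map_getElem_sublist h

lemma lt_of_pair_sublist {u v : V} : ∀ {l : List V}, [u, v] <+ l →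
    ∃ i j : Fin l.length, i < j ∧ l.get i = u ∧ l.get j = v := by
  intro l h
  induction l with
  | nil => simp at h
  | cons a t ih =>
    cases h with
    | cons _ h' =>
      obtain ⟨i, j, hij, hu, hv⟩ := ih h'
      refine ⟨i.succ, j.succ, ?_, by simpa using hu, by simpa using hv⟩
      have := Fin.lt_def.mp hij
      simp only [Fin.lt_def, Fin.val_succ]
      omega
    | cons_cons _ h' =>
      have hv : v ∈ t := List.singleton_sublist.mp h'
      obtain ⟨j, hj⟩ := List.mem_iff_get.mp hv
      refine ⟨⟨0, Nat.succ_pos _⟩, j.succ, ?_, rfl, by simpa using hj⟩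
      simp only [Fin.lt_def, Fin.val_succ]
      omega

lemma before_iff {τ : List V} {u v : V} :
    (∃ i j : Fin τ.length, i < j ∧ τ.get i = u ∧ τ.get j = v) ↔ [u, v] <+ τ := by
  constructor
  · rintro ⟨i, j, hij, rfl, rfl⟩; exact pair_sublist_of_lt hij
  · exact lt_of_pair_sublist

lemma backDeg_eq (G : SimpleGraph V) (τ : List V) (v : V) :
    backDeg G τ v
      = (Finset.univ.filter (fun u => G.Adj v u ∧ [u, v] <+ τ)).card := by
  unfold backDeg
  congr 1
  apply Finset.filter_congr
  intro x _
  rw [before_iff]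

lemma backDeg_mono (G : SimpleGraph V) {τ τ' : List V} {v : V}
    (h : ∀ u, G.Adj v u → [u, v] <+ τ → [u, v] <+ τ') :
    backDeg G τ v ≤ backDeg G τ' v := by
  rw [backDeg_eq, backDeg_eq]
  apply Finset.card_le_card
  intro x hx
  simp only [Finset.mem_filter, Finset.mem_univ, true_and] at hx ⊢
  exact ⟨hx.1, h x hx.1 hx.2⟩

/-- degree-like quantity -/
noncomputable def dgf (G : SimpleGraph V) (v : V) : ℕ :=
  (Finset.univ.filter (fun u => G.Adj v u)).card

lemma backDeg_le_dgf (G : SimpleGraph V) (τ : List V) (v : V) :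
    backDeg G τ v ≤ dgf G v := by
  rw [backDeg_eq]
  apply Finset.card_le_card
  intro x hx
  simp only [Finset.mem_filter, Finset.mem_univ, true_and] at hx ⊢
  exact hx.1

lemma backDeg_last (G : SimpleGraph V) {l : List V} {a : V}
    (hcov : ∀ x : V, x ∈ l ++ [a]) :
    backDeg G (l ++ [a]) a = dgf G a := by
  rw [backDeg_eq]
  unfold dgf
  congr 1
  apply Finset.filter_congr
  intro x _
  simp only [and_iff_left_iff_imp]
  intro hadj
  have hx : x ∈ l ++ [a] := hcov x
  have hxa : x ≠ a := hadj.ne'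
  have hxl : x ∈ l := by
    rcases List.mem_append.mp hx with h | h
    · exact h
    · simp at h; exact absurd h hxa
  have : [x] ++ [a] <+ l ++ [a] :=
    List.Sublist.append (List.singleton_sublist.mpr hxl) (List.Sublist.refl _)
  simpa using this

lemma le_colOrd (G : SimpleGraph V) (τ : List V) (v : V) :
    1 + backDeg G τ v ≤ colOrd G τ :=
  Finset.le_sup (f := fun v => 1 + backDeg G τ v) (Finset.mem_univ v)

lemma colOrd_le (G : SimpleGraph V) {τ : List V} {c : ℕ}
    (h : ∀ v, 1 + backDeg G τ v ≤ c) : colOrd G τ ≤ c :=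
  Finset.sup_le fun v _ => h v

lemma pair_sublist_append {x v : V} {A B : List V} (h : [x, v] <+ A ++ B) :
    [x, v] <+ A ∨ [x, v] <+ B ∨ (x ∈ A ∧ v ∈ B) := by
  induction A with
  | nil => right; left; simpa using h
  | cons a A ih =>
    cases h with
    | cons _ h' =>
      rcases ih h' with h1 | h2 | ⟨hx, hv⟩
      · exact Or.inl (h1.cons a)
      · exact Or.inr (Or.inl h2)
      · exact Or.inr (Or.inr ⟨List.mem_cons_of_mem a hx, hv⟩)
    | cons_cons _ h' =>
      have hv : v ∈ A ++ B := List.singleton_sublist.mp h'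
      rcases List.mem_append.mp hv with hvA | hvB
      · exact Or.inl (List.Sublist.cons₂ x (List.singleton_sublist.mpr hvA))
      · exact Or.inr (Or.inr ⟨List.mem_cons_self (a := x) (l := A), hvB⟩)

lemma bf_trans {σ ρ₁ ρ₂ : List V} {u x v : V} (hvu : v ≠ u)
    (h : [x, v] <+ σ ++ (ρ₁ ++ u :: ρ₂)) :
    [x, v] <+ σ ++ u :: (ρ₁ ++ ρ₂) := by
  have goal_right : [x, v] <+ ρ₁ ++ ρ₂ → [x, v] <+ σ ++ u :: (ρ₁ ++ ρ₂) := fun hh =>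
    (hh.cons u).trans (List.sublist_append_right σ _)
  rcases pair_sublist_append h with hσ | hrest | ⟨hxσ, hvrest⟩
  · exact hσ.trans (List.sublist_append_left σ _)
  · rcases pair_sublist_append hrest with h1 | h2 | ⟨hx1, hv2⟩
    · exact goal_right (h1.trans (List.sublist_append_left ρ₁ ρ₂))
    · -- [x,v] <+ u :: ρ₂ = [u] ++ ρ₂
      have h2' : [x, v] <+ [u] ++ ρ₂ := by simpa using h2
      rcases pair_sublist_append h2' with hu | hρ₂ | ⟨hxu, hvρ₂⟩
      · exact absurd hu.length_le (by simp)
      · exact goal_right (hρ₂.trans (List.sublist_append_right ρ₁ ρ₂))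
      · have hxu' : x = u := by simpa using hxu
        subst hxu'
        have hvmem : v ∈ ρ₁ ++ ρ₂ := List.mem_append.mpr (Or.inr hvρ₂)
        exact (List.Sublist.cons₂ x (List.singleton_sublist.mpr hvmem)).trans
          (List.sublist_append_right σ _)
    · -- x ∈ ρ₁, v ∈ u :: ρ₂
      have hv2' : v ∈ ρ₂ := by
        rcases List.mem_cons.mp hv2 with h | h
        · exact absurd h hvu
        · exact h
      have : [x] ++ [v] <+ ρ₁ ++ ρ₂ :=
        List.Sublist.append (List.singleton_sublist.mpr hx1)
          (List.singleton_sublist.mpr hv2')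
      exact goal_right (by simpa using this)
  · -- x ∈ σ, v ∈ ρ₁ ++ u :: ρ₂
    have hv' : v ∈ u :: (ρ₁ ++ ρ₂) := by
      simp only [List.mem_append, List.mem_cons] at hvrest ⊢
      tauto
    have : [x] ++ [v] <+ σ ++ u :: (ρ₁ ++ ρ₂) :=
      List.Sublist.append (List.singleton_sublist.mpr hxσ)
        (List.singleton_sublist.mpr hv')
    simpa using this

/-- Base col lemma. -/
lemma BCL (G : SimpleGraph V) {σ ρ₁ ρ₂ : List V} {u : V}
    (hmin : ∀ x ∈ ρ₁ ++ ρ₂, dgf G u ≤ dgf G x)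
    (hcov : ∀ x : V, x ∈ σ ++ u :: (ρ₁ ++ ρ₂)) :
    colOrd G (σ ++ (ρ₁ ++ u :: ρ₂)) ≤ colOrd G (σ ++ u :: (ρ₁ ++ ρ₂)) := by
  apply colOrd_le
  intro v
  by_cases hv : v = u
  · subst hv
    rcases eq_or_ne (ρ₁ ++ ρ₂) [] with hnil | hne
    · obtain ⟨h1, h2⟩ := List.append_eq_nil_iff.mp hnil
      subst h1; subst h2
      simpa using le_colOrd G (σ ++ [v]) v
    · have hsplit : σ ++ v :: (ρ₁ ++ ρ₂)
          = (σ ++ v :: (ρ₁ ++ ρ₂).dropLast) ++ [(ρ₁ ++ ρ₂).getLast hne] := by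
        conv_lhs => rw [show ρ₁ ++ ρ₂ = (ρ₁ ++ ρ₂).dropLast ++ [(ρ₁ ++ ρ₂).getLast hne]
          from (List.dropLast_append_getLast hne).symm]
        simp
      set ℓ := (ρ₁ ++ ρ₂).getLast hne with hℓ
      have hcov' : ∀ x : V, x ∈ (σ ++ v :: (ρ₁ ++ ρ₂).dropLast) ++ [ℓ] := by
        intro x; rw [← hsplit]; exact hcov x
      have hlast : backDeg G ((σ ++ v :: (ρ₁ ++ ρ₂).dropLast) ++ [ℓ]) ℓ = dgf G ℓ :=
        backDeg_last G hcov'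
      have hdeg : dgf G v ≤ dgf G ℓ := hmin ℓ ((ρ₁ ++ ρ₂).getLast_mem hne)
      calc 1 + backDeg G (σ ++ (ρ₁ ++ v :: ρ₂)) v
          ≤ 1 + dgf G v := Nat.add_le_add_left (backDeg_le_dgf G _ v) 1
        _ ≤ 1 + dgf G ℓ := Nat.add_le_add_left hdeg 1
        _ = 1 + backDeg G ((σ ++ v :: (ρ₁ ++ ρ₂).dropLast) ++ [ℓ]) ℓ := by rw [hlast]
        _ ≤ colOrd G ((σ ++ v :: (ρ₁ ++ ρ₂).dropLast) ++ [ℓ]) := le_colOrd G _ ℓ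
        _ = colOrd G (σ ++ v :: (ρ₁ ++ ρ₂)) := by rw [← hsplit]
  · calc 1 + backDeg G (σ ++ (ρ₁ ++ u :: ρ₂)) v
        ≤ 1 + backDeg G (σ ++ u :: (ρ₁ ++ ρ₂)) v :=
          Nat.add_le_add_left (backDeg_mono G (fun x _ h => bf_trans hv h)) 1
      _ ≤ colOrd G (σ ++ u :: (ρ₁ ++ ρ₂)) := le_colOrd G _ v


end OrdGame

namespace OrdGame

variable {V : Type*} [Fintype V] (G : SimpleGraph V)

/-- unchosen vertices -/
noncomputable def remS (σ : List V) : Finset V :=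
  Finset.univ.filter (fun v : V => v ∉ σ)

lemma mem_remS {σ : List V} {v : V} : v ∈ remS (V := V) σ ↔ v ∉ σ := by
  simp [remS]

lemma remS_append {σ : List V} {v : V} :
    remS (σ ++ [v]) = (remS σ).erase v := by
  ext x
  simp only [remS, Finset.mem_filter, Finset.mem_univ, true_and, Finset.mem_erase,
    List.mem_append, List.mem_singleton]
  tauto

lemma remS_card_append {σ : List V} {v : V} (hv : v ∈ remS (V := V) σ) :
    (remS (σ ++ [v])).card = (remS (V := V) σ).card - 1 := by
  rw [remS_append, Finset.card_erase_of_mem hv]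

lemma gameVal_terminal {σ : List V} (h : ¬ (remS (V := V) σ).Nonempty) (b : Bool) :
    gameVal G b σ = colOrd G σ := by
  unfold remS at h
  rw [gameVal, dif_neg h]

lemma le_gameVal_true {σ : List V} (h : (remS (V := V) σ).Nonempty) {c : ℕ}
    (H : ∀ v ∈ remS (V := V) σ, c ≤ gameVal G false (σ ++ [v])) :
    c ≤ gameVal G true σ := by
  unfold remS at h H
  rw [gameVal, dif_pos h, if_pos rfl]
  apply Finset.le_inf'
  rintro ⟨v, hv⟩ -
  exact H v hv

lemma gameVal_true_le {σ : List V} {v : V} (hv : v ∈ remS (V := V) σ) :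
    gameVal G true σ ≤ gameVal G false (σ ++ [v]) := by
  unfold remS at hv
  have h : (Finset.univ.filter (fun x : V => x ∉ σ)).Nonempty := ⟨v, hv⟩
  rw [gameVal, dif_pos h, if_pos rfl]
  exact Finset.inf'_le _ (Finset.mem_attach _ ⟨v, hv⟩)

lemma gameVal_false_le {σ : List V} (h : (remS (V := V) σ).Nonempty) {c : ℕ}
    (H : ∀ v ∈ remS (V := V) σ, gameVal G true (σ ++ [v]) ≤ c) :
    gameVal G false σ ≤ c := by
  unfold remS at h H
  rw [gameVal, dif_pos h, if_neg (by simp)]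
  apply Finset.sup'_le
  rintro ⟨v, hv⟩ -
  exact H v hv

lemma le_gameVal_false {σ : List V} {v : V} (hv : v ∈ remS (V := V) σ) :
    gameVal G true (σ ++ [v]) ≤ gameVal G false σ := by
  unfold remS at hv
  have h : (Finset.univ.filter (fun x : V => x ∉ σ)).Nonempty := ⟨v, hv⟩
  have e : gameVal G false σ = (Finset.univ.filter (fun v : V => v ∉ σ)).attach.sup'
      (Finset.attach_nonempty_iff.mpr h) (fun v => gameVal G true (σ ++ [v.1])) := by
    rw [gameVal, dif_pos h]
    exact if_neg (by simp)
  rw [e]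
  exact Finset.le_sup' (fun w => gameVal G true (σ ++ [w.1])) (Finset.mem_attach _ ⟨v, hv⟩)

lemma exists_gameVal_true_eq {σ : List V} (h : (remS (V := V) σ).Nonempty) :
    ∃ v ∈ remS (V := V) σ, gameVal G true σ = gameVal G false (σ ++ [v]) := by
  unfold remS at h ⊢
  obtain ⟨⟨v, hv⟩, -, he⟩ := Finset.exists_mem_eq_inf'
    (Finset.attach_nonempty_iff.mpr h) (fun v => gameVal G false (σ ++ [v.1]))
  refine ⟨v, hv, ?_⟩
  rw [gameVal, dif_pos h, if_pos rfl]
  exact he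

section Triple

variable (G : SimpleGraph V)

/-- moving a minimum-degree vertex `u` earlier (right after `σ`) does not
decrease the game value -/
def StV3 (m : ℕ) : Prop :=
  ∀ (σ ρ₁ ρ₂ : List V) (u : V),
    (∀ x ∈ ρ₁ ++ ρ₂, x ∉ σ) →
    (∀ x : V, x ∉ σ → dgf G u ≤ dgf G x) →
    (remS (σ ++ u :: (ρ₁ ++ ρ₂))).card = m →
    ∀ b, gameVal G b (σ ++ (ρ₁ ++ u :: ρ₂)) ≤ gameVal G b (σ ++ u :: (ρ₁ ++ ρ₂))

/-- Alice-to-move value is at most Bob-to-move value -/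
def StE (m : ℕ) : Prop :=
  ∀ π : List V, (remS (V := V) π).card = m → gameVal G true π ≤ gameVal G false π

/-- inserting a minimum-degree vertex right after `σ` does not decrease the
game value -/
def StV2 (m : ℕ) : Prop :=
  ∀ (σ ρ : List V) (u : V),
    u ∉ σ → u ∉ ρ → (∀ x ∈ ρ, x ∉ σ) →
    (∀ x : V, x ∉ σ → dgf G u ≤ dgf G x) →
    (remS (σ ++ u :: ρ)).card = m →
    ∀ b, gameVal G b (σ ++ ρ) ≤ gameVal G b (σ ++ u :: ρ)

lemma triple : ∀ m : ℕ, StV3 G m ∧ StE G m ∧ StV2 G m := by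
  intro m
  induction m using Nat.strong_induction_on with
  | _ m IH =>
    -- ============ V3g ============
    have hV3 : StV3 G m := by
      intro σ ρ₁ ρ₂ u hdisj hmin hm b
      have hmem : ∀ x, x ∈ σ ++ (ρ₁ ++ u :: ρ₂) ↔ x ∈ σ ++ u :: (ρ₁ ++ ρ₂) := by
        intro x
        simp only [List.mem_append, List.mem_cons]
        tauto
      have hrem : remS (σ ++ (ρ₁ ++ u :: ρ₂)) = remS (σ ++ u :: (ρ₁ ++ ρ₂)) := by
        ext x
        simp only [mem_remS]
        exact not_congr (hmem x)
      by_cases hne : (remS (σ ++ u :: (ρ₁ ++ ρ₂))).Nonempty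
      · have hpos : 0 < m := hm ▸ Finset.card_pos.mpr hne
        have hm1 : m - 1 < m := by omega
        -- the one-step recursive bound
        have key : ∀ w ∈ remS (σ ++ u :: (ρ₁ ++ ρ₂)), ∀ b',
            gameVal G b' ((σ ++ (ρ₁ ++ u :: ρ₂)) ++ [w])
              ≤ gameVal G b' ((σ ++ u :: (ρ₁ ++ ρ₂)) ++ [w]) := by
          intro w hw b'
          have hwσ : w ∉ σ := by
            have := mem_remS.mp hw
            exact fun hx => this (List.mem_append.mpr (Or.inl hx))
          have hdisj' : ∀ x ∈ ρ₁ ++ (ρ₂ ++ [w]), x ∉ σ := by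
            intro x hx
            rcases List.mem_append.mp hx with h | h
            · exact hdisj x (List.mem_append.mpr (Or.inl h))
            · rcases List.mem_append.mp h with h' | h'
              · exact hdisj x (List.mem_append.mpr (Or.inr h'))
              · simp only [List.mem_singleton] at h'; subst h'; exact hwσ
          have hA : (σ ++ u :: (ρ₁ ++ ρ₂)) ++ [w] = σ ++ u :: (ρ₁ ++ (ρ₂ ++ [w])) := by
            simp
          have hB : (σ ++ (ρ₁ ++ u :: ρ₂)) ++ [w] = σ ++ (ρ₁ ++ u :: (ρ₂ ++ [w])) := by
            simp
          have hcard : (remS (σ ++ u :: (ρ₁ ++ (ρ₂ ++ [w])))).card = m - 1 := by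
            rw [← hA, remS_card_append hw, hm]
          have h := (IH (m - 1) hm1).1 σ ρ₁ (ρ₂ ++ [w]) u hdisj' hmin hcard b'
          rw [hA, hB]
          exact h
        cases b with
        | true =>
          apply le_gameVal_true G hne
          intro w hw
          calc gameVal G true (σ ++ (ρ₁ ++ u :: ρ₂))
              ≤ gameVal G false ((σ ++ (ρ₁ ++ u :: ρ₂)) ++ [w]) :=
                gameVal_true_le G (hrem ▸ hw)
            _ ≤ gameVal G false ((σ ++ u :: (ρ₁ ++ ρ₂)) ++ [w]) := key w hw false
        | false =>
          apply gameVal_false_le G (hrem ▸ hne)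
          intro w hw'
          have hw : w ∈ remS (σ ++ u :: (ρ₁ ++ ρ₂)) := hrem ▸ hw'
          calc gameVal G true ((σ ++ (ρ₁ ++ u :: ρ₂)) ++ [w])
              ≤ gameVal G true ((σ ++ u :: (ρ₁ ++ ρ₂)) ++ [w]) := key w hw true
            _ ≤ gameVal G false (σ ++ u :: (ρ₁ ++ ρ₂)) := le_gameVal_false G hw
      · have hneB : ¬ (remS (σ ++ (ρ₁ ++ u :: ρ₂))).Nonempty := by
          rw [hrem]; exact hne
        rw [gameVal_terminal G hneB b, gameVal_terminal G hne b]
        have hcov : ∀ x : V, x ∈ σ ++ u :: (ρ₁ ++ ρ₂) := by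
          intro x
          by_contra hx
          exact hne ⟨x, mem_remS.mpr hx⟩
        exact BCL G (fun x hx => hmin x (hdisj x hx)) hcov
    -- ============ E ============
    have hE : StE G m := by
      intro π hm
      by_cases hne : (remS (V := V) π).Nonempty
      · obtain ⟨u, hu, humin⟩ := Finset.exists_min_image (remS (V := V) π) (dgf G) hne
        have hpos : 0 < m := hm ▸ Finset.card_pos.mpr hne
        have hm1 : m - 1 < m := by omega
        have huπ : u ∉ π := mem_remS.mp hu
        have hcard : (remS (π ++ u :: ([] : List V))).card = m - 1 := by
          have : π ++ u :: ([] : List V) = π ++ [u] := rfl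
          rw [this, remS_card_append hu, hm]
        have h2 := (IH (m - 1) hm1).2.2 π [] u huπ (by simp) (by simp)
          (fun x hx => humin x (mem_remS.mpr hx)) hcard true
        simp only [List.append_nil] at h2
        calc gameVal G true π ≤ gameVal G true (π ++ [u]) := h2
          _ ≤ gameVal G false π := le_gameVal_false G hu
      · rw [gameVal_terminal G hne true, gameVal_terminal G hne false]
    -- ============ V2 ============
    have hV2 : StV2 G m := by
      intro σ ρ u huσ huρ hdisj hmin hm b
      have huσρ : u ∉ σ ++ ρ := by
        simp only [List.mem_append]
        tauto
      have huRem : u ∈ remS (σ ++ ρ) := mem_remS.mpr huσρ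
      have hremL : remS (σ ++ u :: ρ) = (remS (σ ++ ρ)).erase u := by
        ext x
        simp only [mem_remS, Finset.mem_erase, List.mem_append, List.mem_cons]
        tauto
      by_cases hne : (remS (σ ++ u :: ρ)).Nonempty
      · have hpos : 0 < m := hm ▸ Finset.card_pos.mpr hne
        have hm1 : m - 1 < m := by omega
        -- generic IH application for appending one fresh vertex w ≠ u
        have key : ∀ w, w ∈ remS (σ ++ u :: ρ) → ∀ b',
            gameVal G b' ((σ ++ ρ) ++ [w]) ≤ gameVal G b' ((σ ++ u :: ρ) ++ [w]) := by
          intro w hw b'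
          have hwmem := mem_remS.mp hw
          have hwσ : w ∉ σ := fun hx => hwmem (List.mem_append.mpr (Or.inl hx))
          have hwu : w ≠ u := fun hx => hwmem
            (List.mem_append.mpr (Or.inr (List.mem_cons.mpr (Or.inl hx))))
          have hwρ : w ∉ ρ := fun hx => hwmem
            (List.mem_append.mpr (Or.inr (List.mem_cons.mpr (Or.inr hx))))
          have hA : (σ ++ u :: ρ) ++ [w] = σ ++ u :: (ρ ++ [w]) := by simp
          have hB : (σ ++ ρ) ++ [w] = σ ++ (ρ ++ [w]) := by simp
          have hcard : (remS (σ ++ u :: (ρ ++ [w]))).card = m - 1 := by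
            rw [← hA, remS_card_append hw, hm]
          have huρw : u ∉ ρ ++ [w] := by
            simp only [List.mem_append, List.mem_singleton]
            rintro (h | h)
            · exact huρ h
            · exact hwu h.symm
          have hdisj' : ∀ x ∈ ρ ++ [w], x ∉ σ := by
            intro x hx
            rcases List.mem_append.mp hx with h | h
            · exact hdisj x h
            · simp only [List.mem_singleton] at h; subst h; exact hwσ
          have h := (IH (m - 1) hm1).2.2 σ (ρ ++ [w]) u huσ huρw hdisj' hmin hcard b'
          rw [hA, hB]
          exact h
        cases b with
        | true =>
          obtain ⟨w₀, hw₀, he⟩ := exists_gameVal_true_eq G hne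
          have hw₀' : w₀ ∈ remS (σ ++ ρ) := by
            rw [hremL] at hw₀
            exact (Finset.mem_erase.mp hw₀).2
          calc gameVal G true (σ ++ ρ)
              ≤ gameVal G false ((σ ++ ρ) ++ [w₀]) := gameVal_true_le G hw₀'
            _ ≤ gameVal G false ((σ ++ u :: ρ) ++ [w₀]) := key w₀ hw₀ false
            _ = gameVal G true (σ ++ u :: ρ) := he.symm
        | false =>
          apply gameVal_false_le G ⟨u, huRem⟩
          intro w hw
          by_cases hwu : w = u
          · subst hwu
            have hformrem : remS ((σ ++ ρ) ++ [w]) = remS (σ ++ w :: ρ) := by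
              ext x
              simp only [mem_remS, List.mem_append, List.mem_cons, List.mem_singleton]
              tauto
            have hcardE : (remS ((σ ++ ρ) ++ [w])).card = m := by
              rw [hformrem, hm]
            have hEstep := hE ((σ ++ ρ) ++ [w]) hcardE
            have hform : (σ ++ ρ) ++ [w] = σ ++ (ρ ++ w :: []) := by simp
            have hcard3 : (remS (σ ++ w :: (ρ ++ []))).card = m := by
              simp only [List.append_nil]
              exact hm
            have h3 := hV3 σ ρ [] w (by simpa using hdisj) hmin hcard3 false
            simp only [List.append_nil] at h3
            -- h3 : gameVal false (σ ++ (ρ ++ w :: [])) ≤ gameVal false (σ ++ w :: ρ)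
            calc gameVal G true ((σ ++ ρ) ++ [w])
                ≤ gameVal G false ((σ ++ ρ) ++ [w]) := hEstep
              _ = gameVal G false (σ ++ (ρ ++ w :: [])) := by rw [← hform]
              _ ≤ gameVal G false (σ ++ w :: ρ) := h3
          · have hwL : w ∈ remS (σ ++ u :: ρ) := by
              rw [hremL]
              exact Finset.mem_erase.mpr ⟨hwu, hw⟩
            calc gameVal G true ((σ ++ ρ) ++ [w])
                ≤ gameVal G true ((σ ++ u :: ρ) ++ [w]) := key w hwL true
              _ ≤ gameVal G false (σ ++ u :: ρ) := le_gameVal_false G hwL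
      · -- terminal case: remS (σ ++ u :: ρ) = ∅
        have hcov : ∀ x : V, x ∈ σ ++ u :: ρ := by
          intro x
          by_contra hx
          exact hne ⟨x, mem_remS.mpr hx⟩
        have hsingle : remS (σ ++ ρ) = {u} := by
          ext x
          simp only [mem_remS, Finset.mem_singleton, List.mem_append]
          constructor
          · intro hx
            have := hcov x
            simp only [List.mem_append, List.mem_cons] at this
            tauto
          · rintro rfl
            simp only [List.mem_append] at huσρ
            tauto
        have htermApp : ¬ (remS ((σ ++ ρ) ++ [u])).Nonempty := by
          rintro ⟨x, hx⟩
          have hx' := mem_remS.mp hx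
          apply hx'
          have := hcov x
          simp only [List.mem_append, List.mem_cons, List.mem_singleton] at this ⊢
          tauto
        have hBCLform : colOrd G ((σ ++ ρ) ++ [u]) ≤ colOrd G (σ ++ u :: ρ) := by
          have h := BCL G (σ := σ) (ρ₁ := ρ) (ρ₂ := []) (u := u)
            (by simpa using fun x hx => hmin x (hdisj x hx))
            (by simpa using hcov)
          simpa using h
        have hfinal : gameVal G true ((σ ++ ρ) ++ [u]) ≤ gameVal G b (σ ++ u :: ρ) := by
          rw [gameVal_terminal G htermApp true, gameVal_terminal G hne b]
          exact hBCLform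
        cases b with
        | true =>
          calc gameVal G true (σ ++ ρ)
              ≤ gameVal G false ((σ ++ ρ) ++ [u]) := gameVal_true_le G huRem
            _ = gameVal G true ((σ ++ ρ) ++ [u]) := by
                rw [gameVal_terminal G htermApp true, gameVal_terminal G htermApp false]
            _ ≤ gameVal G true (σ ++ u :: ρ) := hfinal
        | false =>
          apply gameVal_false_le G ⟨u, huRem⟩
          intro w hw
          have hwu : w = u := by
            have := hsingle ▸ hw
            simpa using this
          subst hwu
          exact hfinal
    exact ⟨hV3, hE, hV2⟩

lemma gameVal_true_le_false (π : List V) :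
    gameVal G true π ≤ gameVal G false π :=
  (triple G (remS (V := V) π).card).2.1 π rfl

end Triple

section Cross

open List

variable {G : SimpleGraph V}

lemma colOrd_coe_le (H : G.Subgraph) {ρ : List ↥H.verts} {σ : List V}
    (hsub : ρ.map Subtype.val <+ σ) :
    colOrd H.coe ρ ≤ colOrd G σ := by
  apply colOrd_le
  intro v'
  have hb : backDeg H.coe ρ v' ≤ backDeg G σ (v' : V) := by
    rw [backDeg_eq, backDeg_eq]
    apply Finset.card_le_card_of_injOn Subtype.val
    · intro u hu
      simp only [Finset.mem_coe, Finset.mem_filter, Finset.mem_univ, true_and] at hu ⊢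
      refine ⟨?_, ?_⟩
      · exact (SimpleGraph.Subgraph.coe_adj H v' u).mp hu.1 |>.adj_sub
      · have h1 : ([u, v'].map Subtype.val) <+ ρ.map Subtype.val :=
          List.Sublist.map _ hu.2
        simp only [List.map_cons, List.map_nil] at h1
        exact h1.trans hsub
    · exact Subtype.val_injective.injOn
  calc 1 + backDeg H.coe ρ v' ≤ 1 + backDeg G σ (v' : V) := Nat.add_le_add_left hb 1
    _ ≤ colOrd G σ := le_colOrd G σ (v' : V)

lemma cross (H : G.Subgraph) : ∀ m : ℕ, ∀ (σ : List V) (ρ : List ↥H.verts),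
    σ.Nodup → ρ.map Subtype.val = σ.filter (fun x => decide (x ∈ H.verts)) →
    (remS (V := V) σ).card = m →
    gameVal H.coe true ρ ≤ gameVal G true σ ∧
      gameVal H.coe false ρ ≤ gameVal G false σ := by
  intro m
  induction m using Nat.strong_induction_on with
  | _ m IH =>
    intro σ ρ hnd hinv hm
    have hmemρ : ∀ (v : V) (hv : v ∈ H.verts), ((⟨v, hv⟩ : ↥H.verts) ∈ ρ ↔ v ∈ σ) := by
      intro v hv
      constructor
      · intro h
        have h1 : v ∈ ρ.map Subtype.val := List.mem_map.mpr ⟨⟨v, hv⟩, h, rfl⟩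
        rw [hinv] at h1
        exact (List.mem_filter.mp h1).1
      · intro h
        have h1 : v ∈ σ.filter (fun x => decide (x ∈ H.verts)) :=
          List.mem_filter.mpr ⟨h, by simpa using hv⟩
        rw [← hinv] at h1
        obtain ⟨a, ha, hav⟩ := List.mem_map.mp h1
        have : a = ⟨v, hv⟩ := Subtype.ext hav
        rwa [this] at ha
    have hA1 : gameVal H.coe true ρ ≤ gameVal G true σ := by
      by_cases hne : (remS (V := V) σ).Nonempty
      · apply le_gameVal_true G hne
        intro v hv
        have hvσ : v ∉ σ := mem_remS.mp hv
        have hpos : 0 < m := hm ▸ Finset.card_pos.mpr hne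
        have hm1 : m - 1 < m := by omega
        have hndv : (σ ++ [v]).Nodup := by
          refine hnd.append (List.nodup_singleton v) ?_
          intro a ha hav
          simp only [List.mem_singleton] at hav
          subst hav
          exact hvσ ha
        have hcard : (remS (σ ++ [v])).card = m - 1 := by
          rw [remS_card_append hv, hm]
        by_cases hvH : v ∈ H.verts
        · have hv' : (⟨v, hvH⟩ : ↥H.verts) ∉ ρ := fun h => hvσ ((hmemρ v hvH).mp h)
          have hv'rem : (⟨v, hvH⟩ : ↥H.verts) ∈ remS ρ := mem_remS.mpr hv'
          have hinv' : (ρ ++ [(⟨v, hvH⟩ : ↥H.verts)]).map Subtype.val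
              = (σ ++ [v]).filter (fun x => decide (x ∈ H.verts)) := by
            rw [List.map_append, hinv, List.filter_append]
            simp [hvH]
          have hIH := (IH (m - 1) hm1 (σ ++ [v]) (ρ ++ [(⟨v, hvH⟩ : ↥H.verts)]) hndv hinv' hcard).2
          calc gameVal H.coe true ρ
              ≤ gameVal H.coe false (ρ ++ [(⟨v, hvH⟩ : ↥H.verts)]) := gameVal_true_le H.coe hv'rem
            _ ≤ gameVal G false (σ ++ [v]) := hIH
        · have hinv' : ρ.map Subtype.val
              = (σ ++ [v]).filter (fun x => decide (x ∈ H.verts)) := by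
            rw [List.filter_append, ← hinv]
            simp [hvH]
          have hIH := (IH (m - 1) hm1 (σ ++ [v]) ρ hndv hinv' hcard).1
          calc gameVal H.coe true ρ ≤ gameVal G true (σ ++ [v]) := hIH
            _ ≤ gameVal G false (σ ++ [v]) := gameVal_true_le_false G _
      · have hcovσ : ∀ x : V, x ∈ σ := by
          intro x
          by_contra hx
          exact hne ⟨x, mem_remS.mpr hx⟩
        have hneH : ¬ (remS (V := ↥H.verts) ρ).Nonempty := by
          rintro ⟨⟨v, hv⟩, hmem⟩
          exact (mem_remS.mp hmem) ((hmemρ v hv).mpr (hcovσ v))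
        rw [gameVal_terminal G hne true, gameVal_terminal H.coe hneH true]
        exact colOrd_coe_le H (hinv ▸ List.filter_sublist (l := σ))
    have hA2 : gameVal H.coe false ρ ≤ gameVal G false σ := by
      by_cases hneH : (remS (V := ↥H.verts) ρ).Nonempty
      · apply gameVal_false_le H.coe hneH
        rintro ⟨v, hvH⟩ hv'
        have hvρ : (⟨v, hvH⟩ : ↥H.verts) ∉ ρ := mem_remS.mp hv'
        have hvσ : v ∉ σ := fun h => hvρ ((hmemρ v hvH).mpr h)
        have hvrem : v ∈ remS (V := V) σ := mem_remS.mpr hvσ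
        have hne : (remS (V := V) σ).Nonempty := ⟨v, hvrem⟩
        have hpos : 0 < m := hm ▸ Finset.card_pos.mpr hne
        have hm1 : m - 1 < m := by omega
        have hndv : (σ ++ [v]).Nodup := by
          refine hnd.append (List.nodup_singleton v) ?_
          intro a ha hav
          simp only [List.mem_singleton] at hav
          subst hav
          exact hvσ ha
        have hcard : (remS (σ ++ [v])).card = m - 1 := by
          rw [remS_card_append hvrem, hm]
        have hinv' : (ρ ++ [(⟨v, hvH⟩ : ↥H.verts)]).map Subtype.val
            = (σ ++ [v]).filter (fun x => decide (x ∈ H.verts)) := by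
          rw [List.map_append, hinv, List.filter_append]
          simp [hvH]
        have hIH := (IH (m - 1) hm1 (σ ++ [v]) (ρ ++ [(⟨v, hvH⟩ : ↥H.verts)]) hndv hinv' hcard).1
        calc gameVal H.coe true (ρ ++ [(⟨v, hvH⟩ : ↥H.verts)])
            ≤ gameVal G true (σ ++ [v]) := hIH
          _ ≤ gameVal G false σ := le_gameVal_false G hvrem
      · rw [gameVal_terminal H.coe hneH false, ← gameVal_terminal H.coe hneH true]
        calc gameVal H.coe true ρ ≤ gameVal G true σ := hA1
          _ ≤ gameVal G false σ := gameVal_true_le_false G σ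
    exact ⟨hA1, hA2⟩

end Cross

end OrdGame

/-- If `σ` is a preordering of `G` of odd length and `H` is a
subgraph of `G` whose vertex set contains `ra(σ)`, then
`σ-gcol_A(H) ≤ σ-gcol_A(G)`. -/
theorem sigmaGcolA_subgraph_le {V : Type*} [Fintype V] (G : SimpleGraph V)
    (H : G.Subgraph) (σ : List V) (hnodup : σ.Nodup) (hodd : Odd σ.length)
    (hra : ∀ v ∈ σ, v ∈ H.verts) :
    sigmaGcolA H.coe (σ.pmap (fun v hv => (⟨v, hv⟩ : H.verts)) hra) ≤
      sigmaGcolA G σ := by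
  have hinv : (σ.pmap (fun v hv => (⟨v, hv⟩ : H.verts)) hra).map Subtype.val
      = σ.filter (fun x => decide (x ∈ H.verts)) := by
    rw [List.map_pmap]
    have h1 : σ.pmap (fun v (hv : v ∈ H.verts) => ((⟨v, hv⟩ : H.verts) : V)) hra = σ := by
      rw [show (fun (v : V) (hv : v ∈ H.verts) => ((⟨v, hv⟩ : H.verts) : V))
          = (fun v _ => id v) from rfl, List.pmap_eq_map, List.map_id]
    rw [h1]
    exact (List.filter_eq_self.mpr (fun a ha => by simpa using hra a ha)).symm
  exact (OrdGame.cross H (OrdGame.remS (V := V) σ).card σ _ hnodup hinv rfl).1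
end

section
/- Let G be a finite simple graph and let σ be a preordering of G of odd length m. Then σ-gcol_A(G) ≤ σ-gcol(G); that is, Bob cannot obtain a larger score in the σ-game by letting Alice move first (equivalently, by skipping his first turn). -/
open scoped Classical

namespace SigmaGcolProof

open Finset

variable {V : Type*} [Fintype V] {G : SimpleGraph V}

/-- remaining vertices -/
noncomputable def remF (σ : List V) : Finset V := Finset.univ.filter (fun v : V => v ∉ σ)

omit [Fintype V] in
lemma mem_take_append {a : V} {n : ℕ} {l m : List V} :
    a ∈ (l ++ m).take n ↔ a ∈ l.take n ∨ a ∈ m.take (n - l.length) := by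
  rw [List.take_append, List.mem_append]

omit [Fintype V] in
lemma mem_drop_append {a : V} {n : ℕ} {l m : List V} :
    a ∈ (l ++ m).drop n ↔ a ∈ l.drop n ∨ a ∈ m.drop (n - l.length) := by
  rw [List.drop_append, List.mem_append]

/-- `Before τ u v`: `u` occurs strictly before `v` in `τ`. -/
def Before (τ : List V) (u v : V) : Prop :=
  ∃ i j : Fin τ.length, i < j ∧ τ.get i = u ∧ τ.get j = v

lemma backDeg_eq (τ : List V) (v : V) :
    backDeg G τ v = (Finset.univ.filter (fun u => G.Adj v u ∧ Before τ u v)).card := by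
  unfold backDeg Before
  congr

omit [Fintype V] in
lemma before_iff {τ : List V} {u v : V} :
    Before τ u v ↔ ∃ n, u ∈ τ.take n ∧ v ∈ τ.drop n := by
  constructor
  · rintro ⟨i, j, hij, hi, hj⟩
    refine ⟨j.1, ?_, ?_⟩
    · have hlen : i.1 < (τ.take j.1).length := by
        simp only [List.length_take]
        exact lt_min hij i.2
      have : (τ.take j.1)[i.1]'hlen = τ[i.1] := List.getElem_take
      rw [← hi, List.get_eq_getElem, ← this]
      exact List.getElem_mem hlen
    · have hlen : 0 < (τ.drop j.1).length := by
        simp only [List.length_drop]; omega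
      have h0 : (τ.drop j.1)[0]'hlen = τ[j.1 + 0] := List.getElem_drop
      rw [← hj, List.get_eq_getElem]
      have h2 : τ[j.1 + 0]'(by omega) = τ[j.1] := by simp
      rw [← h2, ← h0]
      exact List.getElem_mem hlen
  · rintro ⟨n, hu, hv⟩
    obtain ⟨i, hi, hiu⟩ := List.mem_iff_getElem.mp hu
    obtain ⟨k, hk, hkv⟩ := List.mem_iff_getElem.mp hv
    simp only [List.length_take] at hi
    simp only [List.length_drop] at hk
    have hin : i < n := lt_of_lt_of_le hi (min_le_left _ _)
    have hiτ : i < τ.length := lt_of_lt_of_le hi (min_le_right _ _)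
    have hjτ : n + k < τ.length := by omega
    refine ⟨⟨i, hiτ⟩, ⟨n + k, hjτ⟩, Fin.mk_lt_mk.mpr (by omega), ?_, ?_⟩
    · rw [List.get_eq_getElem, ← hiu]
      exact (List.getElem_take).symm
    · rw [List.get_eq_getElem, ← hkv]
      exact (List.getElem_drop).symm

lemma backDeg_le_degree (τ : List V) (p : V) : backDeg G τ p ≤ G.degree p := by
  rw [backDeg_eq, ← SimpleGraph.card_neighborFinset_eq_degree]
  apply Finset.card_le_card
  intro u hu
  simp only [Finset.mem_filter] at hu
  rw [SimpleGraph.mem_neighborFinset]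
  exact hu.2.1

lemma le_colOrd (τ : List V) (v : V) : 1 + backDeg G τ v ≤ colOrd G τ := by
  unfold colOrd
  exact Finset.le_sup (f := fun w => 1 + backDeg G τ w) (Finset.mem_univ v)

lemma colOrd_le {τ : List V} {b : ℕ} (h : ∀ v : V, 1 + backDeg G τ v ≤ b) :
    colOrd G τ ≤ b := by
  unfold colOrd
  exact Finset.sup_le (fun v _ => h v)

omit [Fintype V] in
lemma before_transfer {x y z : List V} {p u v : V} (hv : v ≠ p)
    (h : Before (x ++ y ++ [p] ++ z) u v) : Before (x ++ [p] ++ y ++ z) u v := by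
  rw [before_iff] at h ⊢
  obtain ⟨n, hu, hvd⟩ := h
  have hassoc : x ++ y ++ [p] ++ z = x ++ (y ++ ([p] ++ z)) := by simp
  have hassoc' : x ++ [p] ++ y ++ z = x ++ ([p] ++ (y ++ z)) := by simp
  rw [hassoc] at hu hvd
  rw [hassoc']
  simp only [mem_take_append, mem_drop_append, List.length_singleton] at hu hvd ⊢
  by_cases h1 : n ≤ x.length
  · have e1 : n - x.length = 0 := by omega
    rw [e1] at hu hvd
    refine ⟨n, ?_, ?_⟩
    · rw [e1]
      simp only [Nat.zero_sub, List.take_zero, List.not_mem_nil, or_false] at hu ⊢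
      exact hu
    · rw [e1]
      simp only [Nat.zero_sub, List.drop_zero, List.not_mem_nil, or_false] at hvd ⊢
      rcases hvd with h' | h' | h' | h' <;> tauto
  · have hx : x.take n = x := List.take_of_length_le (by omega)
    have hx' : x.take (n+1) = x := List.take_of_length_le (by omega)
    have hdx : x.drop n = [] := List.drop_eq_nil_of_le (by omega)
    have hdx' : x.drop (n+1) = [] := List.drop_eq_nil_of_le (by omega)
    by_cases h2 : n ≤ x.length + y.length
    · -- middle case, use n' = n + 1
      have e1 : n - x.length - y.length = 0 := by omega
      have e2 : n + 1 - x.length = (n - x.length) + 1 := by omega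
      have t1 : ([p] : List V).take (n - x.length + 1) = [p] :=
        List.take_of_length_le (by simp only [List.length_singleton]; omega)
      have t2 : ([p] : List V).drop (n - x.length + 1) = [] :=
        List.drop_eq_nil_of_le (by simp only [List.length_singleton]; omega)
      rw [hx, e1] at hu
      rw [hdx, e1] at hvd
      simp only [Nat.zero_sub, List.take_zero, List.drop_zero, List.not_mem_nil,
        or_false, false_or] at hu hvd
      refine ⟨n + 1, ?_, ?_⟩
      · rw [hx', e2, t1]
        simp only [Nat.add_sub_cancel, e1]
        simp only [Nat.zero_sub, List.take_zero, List.not_mem_nil, or_false]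
        tauto
      · rw [hdx', e2, t2]
        simp only [Nat.add_sub_cancel, e1]
        simp only [Nat.zero_sub, List.drop_zero, List.not_mem_nil, false_or]
        rcases hvd with h' | h' | h'
        · tauto
        · exact absurd (List.mem_singleton.mp h') hv
        · tauto
    · -- late case, use n' = n
      have hy : y.take (n - x.length) = y := List.take_of_length_le (by omega)
      have hdy : y.drop (n - x.length) = [] := List.drop_eq_nil_of_le (by omega)
      have hp : ([p] : List V).take (n - x.length - y.length) = [p] :=
        List.take_of_length_le (by simp only [List.length_singleton]; omega)
      have hdp : ([p] : List V).drop (n - x.length - y.length) = [] :=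
        List.drop_eq_nil_of_le (by simp only [List.length_singleton]; omega)
      have hp' : ([p] : List V).take (n - x.length) = [p] :=
        List.take_of_length_le (by simp only [List.length_singleton]; omega)
      have hdp' : ([p] : List V).drop (n - x.length) = [] :=
        List.drop_eq_nil_of_le (by simp only [List.length_singleton]; omega)
      have hy2 : y.take (n - x.length - 1) = y := List.take_of_length_le (by omega)
      have hdy2 : y.drop (n - x.length - 1) = [] := List.drop_eq_nil_of_le (by omega)
      have e6 : n - x.length - 1 - y.length = n - x.length - y.length - 1 := by omega
      rw [hx, hy, hp] at hu
      rw [hdx, hdy, hdp] at hvd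
      simp only [List.not_mem_nil, false_or] at hvd
      refine ⟨n, ?_, ?_⟩
      · rw [hx, hp', hy2, e6]
        tauto
      · rw [hdx, hdp', hdy2, e6]
        simp only [List.not_mem_nil, false_or]
        exact hvd

lemma colOrd_move (x y z : List V) (p : V) :
    colOrd G (x ++ y ++ [p] ++ z) ≤ max (colOrd G (x ++ [p] ++ y ++ z)) (1 + G.degree p) := by
  apply colOrd_le
  intro v
  by_cases hv : v = p
  · subst hv
    exact le_max_of_le_right (Nat.add_le_add_left (backDeg_le_degree _ _) 1)
  · apply le_max_of_le_left
    refine le_trans ?_ (le_colOrd _ v)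
    have hsub : (Finset.univ.filter (fun u => G.Adj v u ∧ Before (x ++ y ++ [p] ++ z) u v))
        ⊆ (Finset.univ.filter (fun u => G.Adj v u ∧ Before (x ++ [p] ++ y ++ z) u v)) := by
      intro u hu
      simp only [Finset.mem_filter] at hu ⊢
      exact ⟨hu.1, hu.2.1, before_transfer hv hu.2.2⟩
    rw [backDeg_eq, backDeg_eq]
    exact Nat.add_le_add_left (Finset.card_le_card hsub) 1

end SigmaGcolProof


namespace SigmaGcolProof

variable {V : Type*} [Fintype V] {G : SimpleGraph V}

lemma mem_remF {σ : List V} {x : V} : x ∈ remF (V := V) σ ↔ x ∉ σ := by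
  simp [remF]

lemma remF_congr {σ σ' : List V} (h : ∀ a, a ∈ σ ↔ a ∈ σ') :
    remF (V := V) σ = remF σ' := by
  ext a; simp [remF, h]

lemma remF_append {σ : List V} {x : V} :
    remF (σ ++ [x]) = (remF (V := V) σ).erase x := by
  ext a
  simp only [mem_remF, List.mem_append, List.mem_singleton, Finset.mem_erase, mem_remF]
  tauto

lemma remF_append_subset {σ : List V} {x : V} :
    remF (σ ++ [x]) ⊆ remF (V := V) σ := by
  rw [remF_append]; exact Finset.erase_subset _ _

lemma card_remF_append {σ : List V} {x : V} (hx : x ∈ remF (V := V) σ) :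
    (remF (σ ++ [x])).card + 1 = (remF (V := V) σ).card := by
  rw [remF_append, Finset.card_erase_of_mem hx]
  have : 0 < (remF (V := V) σ).card := Finset.card_pos.mpr ⟨x, hx⟩
  omega

lemma gameVal_empty {c : Bool} {σ : List V} (h : ¬ (remF (V := V) σ).Nonempty) :
    gameVal G c σ = colOrd G σ := by
  rw [gameVal]; exact dif_neg h

lemma F1 {σ : List V} {x : V} (hx : x ∈ remF (V := V) σ) :
    gameVal G true σ ≤ gameVal G false (σ ++ [x]) := by
  have h : (Finset.univ.filter (fun v : V => v ∉ σ)).Nonempty := ⟨x, hx⟩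
  rw [gameVal, dif_pos h, if_pos rfl]
  exact Finset.inf'_le (fun v => gameVal G false (σ ++ [v.1]))
    (Finset.mem_attach _ ⟨x, hx⟩)

lemma F2 {σ : List V} {x : V} (hx : x ∈ remF (V := V) σ) :
    gameVal G true (σ ++ [x]) ≤ gameVal G false σ := by
  have h : (Finset.univ.filter (fun v : V => v ∉ σ)).Nonempty := ⟨x, hx⟩
  conv_rhs => rw [gameVal]
  rw [dif_pos h, if_neg (by simp)]
  exact Finset.le_sup' (fun v => gameVal G true (σ ++ [v.1]))
    (Finset.mem_attach _ ⟨x, hx⟩)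

lemma F3 {σ : List V} (h : (remF (V := V) σ).Nonempty) :
    ∃ x ∈ remF (V := V) σ, gameVal G false (σ ++ [x]) ≤ gameVal G true σ := by
  have h' : (Finset.univ.filter (fun v : V => v ∉ σ)).Nonempty := h
  conv_rhs => rw [gameVal]
  rw [dif_pos h', if_pos rfl]
  obtain ⟨b, _, heq⟩ := Finset.exists_mem_eq_inf' (Finset.attach_nonempty_iff.mpr h')
    (fun v : {x // x ∈ Finset.univ.filter (fun v : V => v ∉ σ)} =>
      gameVal G false (σ ++ [v.1]))
  exact ⟨b.1, b.2, le_of_eq heq.symm⟩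

lemma F4 {σ : List V} (h : (remF (V := V) σ).Nonempty) {b : ℕ}
    (hb : ∀ x ∈ remF (V := V) σ, gameVal G true (σ ++ [x]) ≤ b) :
    gameVal G false σ ≤ b := by
  have h' : (Finset.univ.filter (fun v : V => v ∉ σ)).Nonempty := h
  rw [gameVal, dif_pos h', if_neg (by simp)]
  exact Finset.sup'_le _ _ (fun v _ => hb v.1 v.2)

lemma F5 {σ : List V} (h : (remF (V := V) σ).Nonempty) {b : ℕ}
    (hb : ∀ x ∈ remF (V := V) σ, b ≤ gameVal G false (σ ++ [x])) :
    b ≤ gameVal G true σ := by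
  have h' : (Finset.univ.filter (fun v : V => v ∉ σ)).Nonempty := h
  rw [gameVal, dif_pos h', if_pos rfl]
  exact Finset.le_inf' _ _ (fun v _ => hb v.1 v.2)

end SigmaGcolProof


namespace SigmaGcolProof

variable {V : Type*} [Fintype V] {G : SimpleGraph V}

/-- Reordering lemma: with the same set of placed vertices and the same player
to move, delaying `p` costs at most `1 + deg p`. -/
lemma lemR : ∀ (N : ℕ) (x y z : List V) (p : V) (c : Bool),
    (remF (V := V) (x ++ y ++ [p] ++ z)).card ≤ N →
    gameVal G c (x ++ y ++ [p] ++ z) ≤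
      max (gameVal G c (x ++ [p] ++ y ++ z)) (1 + G.degree p) := by
  intro N
  induction N with
  | zero =>
    intro x y z p c hcard
    have hne : ¬ (remF (V := V) (x ++ y ++ [p] ++ z)).Nonempty := by
      rw [Finset.nonempty_iff_ne_empty]
      simp only [ne_eq, not_not]
      exact Finset.card_eq_zero.mp (Nat.le_zero.mp hcard)
    have hne' : ¬ (remF (V := V) (x ++ [p] ++ y ++ z)).Nonempty := by
      rwa [remF_congr (σ := x ++ [p] ++ y ++ z) (σ' := x ++ y ++ [p] ++ z)
        (by intro a; simp [List.mem_append]; tauto)]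
    rw [gameVal_empty hne, gameVal_empty hne']
    exact le_trans (colOrd_move x y z p) le_rfl
  | succ N ih =>
    intro x y z p c hcard
    have hEq : remF (V := V) (x ++ y ++ [p] ++ z) = remF (x ++ [p] ++ y ++ z) :=
      remF_congr (by intro a; simp [List.mem_append]; tauto)
    by_cases h : (remF (V := V) (x ++ y ++ [p] ++ z)).Nonempty
    · have hE : (remF (V := V) (x ++ [p] ++ y ++ z)).Nonempty := hEq ▸ h
      cases c with
      | true =>
        obtain ⟨a, haE, hle⟩ := F3 (G := G) hE
        have haL : a ∈ remF (V := V) (x ++ y ++ [p] ++ z) := hEq ▸ haE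
        have step1 : gameVal G true (x ++ y ++ [p] ++ z) ≤
            gameVal G false ((x ++ y ++ [p] ++ z) ++ [a]) := F1 haL
        have e1 : (x ++ y ++ [p] ++ z) ++ [a] = x ++ y ++ [p] ++ (z ++ [a]) := by simp
        have e2 : (x ++ [p] ++ y ++ z) ++ [a] = x ++ [p] ++ y ++ (z ++ [a]) := by simp
        rw [e1] at step1
        have hcard' : (remF (V := V) (x ++ y ++ [p] ++ (z ++ [a]))).card ≤ N := by
          have := card_remF_append (V := V) haL
          rw [e1] at this
          omega
        have step2 := ih x y (z ++ [a]) p false hcard'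
        have step3 : gameVal G false (x ++ [p] ++ y ++ (z ++ [a])) ≤
            gameVal G true (x ++ [p] ++ y ++ z) := by rw [← e2]; exact hle
        exact le_trans step1 (le_trans step2 (max_le_max step3 le_rfl))
      | false =>
        apply F4 h
        intro a haL
        have haE : a ∈ remF (V := V) (x ++ [p] ++ y ++ z) := hEq ▸ haL
        have e1 : (x ++ y ++ [p] ++ z) ++ [a] = x ++ y ++ [p] ++ (z ++ [a]) := by simp
        have e2 : (x ++ [p] ++ y ++ z) ++ [a] = x ++ [p] ++ y ++ (z ++ [a]) := by simp
        have hcard' : (remF (V := V) (x ++ y ++ [p] ++ (z ++ [a]))).card ≤ N := by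
          have := card_remF_append (V := V) haL
          rw [e1] at this
          omega
        have step2 := ih x y (z ++ [a]) p true hcard'
        have step3 : gameVal G true (x ++ [p] ++ y ++ (z ++ [a])) ≤
            gameVal G false (x ++ [p] ++ y ++ z) := by rw [← e2]; exact F2 haE
        rw [e1]
        exact le_trans step2 (max_le_max step3 le_rfl)
    · rw [gameVal_empty h, gameVal_empty (hEq ▸ h)]
      exact colOrd_move x y z p

/-- Lower bound: the value is at least `1 + ` the minimum remaining degree. -/
lemma lemLB : ∀ (N : ℕ) (σ : List V) (c : Bool) (h : (remF (V := V) σ).Nonempty),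
    (remF (V := V) σ).card ≤ N →
    1 + (remF (V := V) σ).inf' h (fun v => G.degree v) ≤ gameVal G c σ := by
  intro N
  induction N with
  | zero =>
    intro σ c h hcard
    exact absurd (Finset.card_eq_zero.mp (Nat.le_zero.mp hcard))
      (Finset.nonempty_iff_ne_empty.mp h)
  | succ N ih =>
    intro σ c h hcard
    have hchild : ∀ x ∈ remF (V := V) σ, ∀ c' : Bool,
        1 + (remF (V := V) σ).inf' h (fun v => G.degree v) ≤ gameVal G c' (σ ++ [x]) := by
      intro x hx c'
      by_cases h2 : (remF (V := V) (σ ++ [x])).Nonempty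
      · refine le_trans ?_ (ih (σ ++ [x]) c' h2 (by have := card_remF_append (V := V) hx; omega))
        apply Nat.add_le_add_left
        apply Finset.le_inf' h2
        intro y hy
        exact Finset.inf'_le _ (remF_append_subset hy)
      · rw [gameVal_empty h2]
        have hdeg : G.degree x ≤ backDeg G (σ ++ [x]) x := by
          rw [backDeg_eq, ← SimpleGraph.card_neighborFinset_eq_degree]
          apply Finset.card_le_card
          intro u hu
          rw [SimpleGraph.mem_neighborFinset] at hu
          simp only [Finset.mem_filter, Finset.mem_univ, true_and]
          refine ⟨hu, ?_⟩
          have hux : u ≠ x := (G.ne_of_adj hu).symm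
          have humem : u ∈ σ ++ [x] := by
            by_contra hc
            exact h2 ⟨u, mem_remF.mpr hc⟩
          have huσ : u ∈ σ := by
            rcases List.mem_append.mp humem with h' | h'
            · exact h'
            · exact absurd (List.mem_singleton.mp h') hux
          rw [before_iff]
          refine ⟨σ.length, ?_, ?_⟩
          · rw [List.take_left]; exact huσ
          · rw [List.drop_left]; exact List.mem_singleton.mpr rfl
        have hinf : (remF (V := V) σ).inf' h (fun v => G.degree v) ≤ G.degree x :=
          Finset.inf'_le _ hx
        have := le_colOrd (G := G) (σ ++ [x]) x
        omega
    cases c with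
    | true => exact F5 h (fun x hx => hchild x hx false)
    | false =>
      obtain ⟨x, hx⟩ := h
      exact le_trans (hchild x hx true) (F2 hx)

/-- Joint induction: the key lemma K and the main statement. -/
lemma KMain : ∀ N : ℕ,
    (∀ (σ ρ : List V) (p : V) (c : Bool), p ∉ σ ++ ρ →
      (remF (V := V) (σ ++ ρ)).card ≤ N →
      gameVal G c (σ ++ ρ) ≤ max (gameVal G c (σ ++ [p] ++ ρ)) (1 + G.degree p)) ∧
    (∀ σ : List V, (remF (V := V) σ).card ≤ N →
      gameVal G true σ ≤ gameVal G false σ) := by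
  intro N
  induction N with
  | zero =>
    constructor
    · intro σ ρ p c hp hcard
      have : p ∈ remF (V := V) (σ ++ ρ) := mem_remF.mpr hp
      have := Finset.card_pos.mpr ⟨p, this⟩
      omega
    · intro σ hcard
      have hne : ¬ (remF (V := V) σ).Nonempty := by
        rw [Finset.nonempty_iff_ne_empty]
        simp only [ne_eq, not_not]
        exact Finset.card_eq_zero.mp (Nat.le_zero.mp hcard)
      rw [gameVal_empty hne, gameVal_empty hne]
  | succ N ih =>
    have hK : ∀ (σ ρ : List V) (p : V) (c : Bool), p ∉ σ ++ ρ →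
        (remF (V := V) (σ ++ ρ)).card ≤ N + 1 →
        gameVal G c (σ ++ ρ) ≤ max (gameVal G c (σ ++ [p] ++ ρ)) (1 + G.degree p) := by
      intro σ ρ p c hp hcard
      have hpmem : p ∈ remF (V := V) (σ ++ ρ) := mem_remF.mpr hp
      simp only [List.mem_append, not_or] at hp
      have hRE : ∀ a : V, a ∈ remF (V := V) (σ ++ [p] ++ ρ) ↔
          a ∈ remF (V := V) (σ ++ ρ) ∧ a ≠ p := by
        intro a
        simp only [mem_remF, List.mem_append, List.mem_singleton]
        tauto
      have hLne : (remF (V := V) (σ ++ ρ)).Nonempty := ⟨p, hpmem⟩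
      -- the `z = p` case helper: Bob (or Alice) completes by playing p late
      have hzp : gameVal G true ((σ ++ ρ) ++ [p]) ≤
          max (gameVal G c (σ ++ [p] ++ ρ)) (1 + G.degree p) ∨ True := Or.inr trivial
      by_cases hE : (remF (V := V) (σ ++ [p] ++ ρ)).Nonempty
      · cases c with
        | true =>
          obtain ⟨a, haE, hle⟩ := F3 (G := G) hE
          obtain ⟨haL, hap⟩ := (hRE a).mp haE
          have step1 : gameVal G true (σ ++ ρ) ≤
              gameVal G false ((σ ++ ρ) ++ [a]) := F1 haL
          have e1 : (σ ++ ρ) ++ [a] = σ ++ (ρ ++ [a]) := by simp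
          have e2 : (σ ++ [p] ++ ρ) ++ [a] = σ ++ [p] ++ (ρ ++ [a]) := by simp
          have hcard' : (remF (V := V) (σ ++ (ρ ++ [a]))).card ≤ N := by
            have := card_remF_append (V := V) haL
            rw [e1] at this
            omega
          have hp' : p ∉ σ ++ (ρ ++ [a]) := by
            simp only [List.mem_append, List.mem_singleton, not_or]
            exact ⟨hp.1, hp.2, fun h' => hap h'.symm⟩
          have step2 := (ih.1) σ (ρ ++ [a]) p false hp' hcard'
          have step3 : gameVal G false (σ ++ [p] ++ (ρ ++ [a])) ≤
              gameVal G true (σ ++ [p] ++ ρ) := by rw [← e2]; exact hle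
          rw [e1] at step1
          exact le_trans step1 (le_trans step2 (max_le_max step3 le_rfl))
        | false =>
          apply F4 hLne
          intro a haL
          by_cases hap : a = p
          · subst hap
            have hMain := (ih.2) ((σ ++ ρ) ++ [a])
              (by have := card_remF_append (V := V) haL; omega)
            have e3 : (σ ++ ρ) ++ [a] = σ ++ ρ ++ [a] ++ [] := by simp
            have e4 : σ ++ [a] ++ ρ ++ [] = σ ++ [a] ++ ρ := by simp
            have hR := lemR (G := G) (N + 1) σ ρ [] a false
              (by rw [← e3]
                  have := card_remF_append (V := V) haL
                  omega)
            rw [← e3, e4] at hR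
            exact le_trans hMain hR
          · have haE : a ∈ remF (V := V) (σ ++ [p] ++ ρ) := (hRE a).mpr ⟨haL, hap⟩
            have e1 : (σ ++ ρ) ++ [a] = σ ++ (ρ ++ [a]) := by simp
            have e2 : (σ ++ [p] ++ ρ) ++ [a] = σ ++ [p] ++ (ρ ++ [a]) := by simp
            have hcard' : (remF (V := V) (σ ++ (ρ ++ [a]))).card ≤ N := by
              have := card_remF_append (V := V) haL
              rw [e1] at this
              omega
            have hp' : p ∉ σ ++ (ρ ++ [a]) := by
              simp only [List.mem_append, List.mem_singleton, not_or]
              exact ⟨hp.1, hp.2, fun h' => hap h'.symm⟩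
            have step2 := (ih.1) σ (ρ ++ [a]) p true hp' hcard'
            have step3 : gameVal G true (σ ++ [p] ++ (ρ ++ [a])) ≤
                gameVal G false (σ ++ [p] ++ ρ) := by rw [← e2]; exact F2 haE
            rw [e1]
            exact le_trans step2 (max_le_max step3 le_rfl)
      · -- only p remains
        have hrem1 : ∀ a ∈ remF (V := V) (σ ++ ρ), a = p := by
          intro a ha
          by_contra hap
          exact hE ⟨a, (hRE a).mpr ⟨ha, hap⟩⟩
        have hfin : ¬ (remF (V := V) ((σ ++ ρ) ++ [p])).Nonempty := by
          rintro ⟨b, hb⟩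
          have hbL := remF_append_subset hb
          have := hrem1 b hbL
          subst this
          rw [mem_remF] at hb
          exact hb (List.mem_append.mpr (Or.inr (List.mem_singleton.mpr rfl)))
        have hval : ∀ c' : Bool, gameVal G c' ((σ ++ ρ) ++ [p]) = colOrd G ((σ ++ ρ) ++ [p]) :=
          fun _ => gameVal_empty hfin
        have hvalE : gameVal G c (σ ++ [p] ++ ρ) = colOrd G (σ ++ [p] ++ ρ) :=
          gameVal_empty hE
        have hcol : colOrd G ((σ ++ ρ) ++ [p]) ≤
            max (colOrd G (σ ++ [p] ++ ρ)) (1 + G.degree p) := by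
          have e3 : (σ ++ ρ) ++ [p] = σ ++ ρ ++ [p] ++ [] := by simp
          have e4 : σ ++ [p] ++ ρ ++ [] = σ ++ [p] ++ ρ := by simp
          have := colOrd_move (G := G) σ ρ [] p
          rw [e4] at this
          rw [e3]
          exact this
        cases c with
        | true =>
          refine le_trans (F1 hpmem) ?_
          rw [hval false, hvalE]
          exact hcol
        | false =>
          apply F4 hLne
          intro a haL
          have := hrem1 a haL
          subst this
          rw [hval true, hvalE]
          exact hcol
    refine ⟨hK, ?_⟩
    intro σ hcard
    by_cases h : (remF (V := V) σ).Nonempty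
    · obtain ⟨p, hpm, hpeq⟩ := Finset.exists_mem_eq_inf' h (fun v => G.degree v)
      have hp : p ∉ σ ++ ([] : List V) := by
        simp only [List.append_nil]
        exact mem_remF.mp hpm
      have hcard0 : (remF (V := V) (σ ++ ([] : List V))).card ≤ N + 1 := by
        simpa using hcard
      have hKs := hK σ [] p true hp hcard0
      simp only [List.append_nil] at hKs
      have h1 : gameVal G true (σ ++ [p]) ≤ gameVal G false σ := F2 hpm
      have h2 : 1 + G.degree p ≤ gameVal G false σ := by
        have := lemLB (G := G) (N + 1) σ false h hcard
        rw [hpeq] at this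
        exact this
      exact le_trans hKs (max_le h1 h2)
    · rw [gameVal_empty h, gameVal_empty h]

end SigmaGcolProof

/-- If `σ` is a preordering of `G` of odd length, then
`σ-gcol_A(G) ≤ σ-gcol(G)`: Bob cannot obtain a larger score in the `σ`-game
by letting Alice move first (i.e. by skipping his first turn). -/
theorem sigmaGcolA_le_sigmaGcol {V : Type*} [Fintype V] (G : SimpleGraph V)
    (σ : List V) (hnodup : σ.Nodup) (hodd : Odd σ.length) :
    sigmaGcolA G σ ≤ sigmaGcol G σ := by
  unfold sigmaGcolA sigmaGcol
  rw [if_neg (by rw [Nat.not_even_iff_odd]; exact hodd)]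
  exact (SigmaGcolProof.KMain (G := G)
    (Finset.univ.filter (fun v : V => v ∉ σ)).card).2 σ le_rfl
end

section
/- Let G be a finite simple graph with gcol_A(G) = s. Then s ≤ gcol_B(G) ≤ s + 1; that is, the value of the Bob ordering game on G exceeds the value of the (Alice) ordering game by at most one, and is never smaller. -/
open scoped Classical

namespace GcolAux

set_option linter.unusedSectionVars false
open Finset

variable {V : Type*} [Fintype V] (G : SimpleGraph V)

/-- `1 +` number of neighbors of `v` inside `S`. -/
noncomputable def hc (S : Finset V) (v : V) : ℕ :=
  1 + (S.filter (fun u => G.Adj v u)).card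

/-- degree of `v`. -/
noncomputable def deg (v : V) : ℕ :=
  ((univ : Finset V).filter (fun u => G.Adj v u)).card

lemma hc_mono {S T : Finset V} (h : S ⊆ T) (v : V) : hc G S v ≤ hc G T v :=
  Nat.add_le_add_left (Finset.card_le_card (Finset.filter_subset_filter _ h)) 1

lemma hc_le_deg (S : Finset V) (v : V) : hc G S v ≤ 1 + deg G v :=
  Nat.add_le_add_left (Finset.card_le_card (Finset.filter_subset_filter _ (Finset.subset_univ S))) 1

lemma hc_lip (S : Finset V) (w v : V) : hc G (insert w S) v ≤ hc G S v + 1 := by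
  have hsub : (insert w S).filter (fun u => G.Adj v u) ⊆
      insert w (S.filter (fun u => G.Adj v u)) := by
    intro u hu
    simp only [Finset.mem_filter, Finset.mem_insert] at hu ⊢
    rcases hu.1 with h | h
    · exact Or.inl h
    · exact Or.inr ⟨h, hu.2⟩
  have h1 : ((insert w S).filter (fun u => G.Adj v u)).card ≤
      (S.filter (fun u => G.Adj v u)).card + 1 :=
    le_trans (Finset.card_le_card hsub) (Finset.card_insert_le _ _)
  unfold hc
  omega

lemma hc_erase_self (v : V) : hc G ((univ : Finset V).erase v) v = 1 + deg G v := by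
  unfold hc deg
  congr 2
  ext u
  simp only [Finset.mem_filter, Finset.mem_erase, Finset.mem_univ, true_and, and_true]
  constructor
  · rintro ⟨-, h⟩; exact h
  · intro h
    refine ⟨fun he => ?_, h⟩
    subst he
    exact G.loopless.irrefl _ h

/-- set-form game value. -/
noncomputable def gset (b : Bool) (S : Finset V) : ℕ :=
  if h : ((univ : Finset V) \ S).Nonempty then
    if b then
      ((univ : Finset V) \ S).attach.inf' (Finset.attach_nonempty_iff.mpr h)
        (fun v => max (hc G S v.1) (gset false (insert v.1 S)))
    else
      ((univ : Finset V) \ S).attach.sup' (Finset.attach_nonempty_iff.mpr h)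
        (fun v => max (hc G S v.1) (gset true (insert v.1 S)))
  else 0
termination_by ((univ : Finset V) \ S).card
decreasing_by
  all_goals {
    have hv : ↑v ∈ (univ : Finset V) \ S := v.2
    apply Finset.card_lt_card
    constructor
    · intro u hu
      simp only [Finset.mem_sdiff, Finset.mem_insert, Finset.mem_univ, true_and] at hu ⊢
      exact fun h' => hu (Or.inr h')
    · intro hsub
      have := hsub hv
      simp at this }

lemma attach_inf' (s : Finset V) (H : s.Nonempty) (f : V → ℕ) :
    s.attach.inf' (Finset.attach_nonempty_iff.mpr H) (fun v => f v.1) = s.inf' H f := by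
  apply le_antisymm
  · exact Finset.le_inf' _ _ (fun b hb => Finset.inf'_le _ (Finset.mem_attach _ ⟨b, hb⟩))
  · exact Finset.le_inf' _ _ (fun b _ => Finset.inf'_le _ b.2)

lemma attach_sup' (s : Finset V) (H : s.Nonempty) (f : V → ℕ) :
    s.attach.sup' (Finset.attach_nonempty_iff.mpr H) (fun v => f v.1) = s.sup' H f := by
  apply le_antisymm
  · exact Finset.sup'_le _ _ (fun b _ => Finset.le_sup' _ b.2)
  · exact Finset.sup'_le _ _
      (fun b hb => Finset.le_sup' (f := fun v : {x // x ∈ s} => f v.1) (Finset.mem_attach _ ⟨b, hb⟩))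

lemma gset_of_empty {S : Finset V} (h : ¬ ((univ : Finset V) \ S).Nonempty) (b : Bool) :
    gset G b S = 0 := by
  rw [gset.eq_def, dif_neg h]

lemma gset_true {S : Finset V} (h : ((univ : Finset V) \ S).Nonempty) :
    gset G true S =
      ((univ : Finset V) \ S).inf' h (fun v => max (hc G S v) (gset G false (insert v S))) := by
  rw [gset.eq_def, dif_pos h, if_pos rfl]
  exact attach_inf' ((univ : Finset V) \ S) h (fun v => max (hc G S v) (gset G false (insert v S)))

lemma gset_false {S : Finset V} (h : ((univ : Finset V) \ S).Nonempty) :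
    gset G false S =
      ((univ : Finset V) \ S).sup' h (fun v => max (hc G S v) (gset G true (insert v S))) := by
  rw [gset.eq_def, dif_pos h]
  simp only [Bool.false_eq_true, if_false]
  exact attach_sup' ((univ : Finset V) \ S) h (fun v => max (hc G S v) (gset G true (insert v S)))

lemma gset_true_le {S : Finset V} {v : V} (hv : v ∈ (univ : Finset V) \ S) :
    gset G true S ≤ max (hc G S v) (gset G false (insert v S)) := by
  rw [gset_true G ⟨v, hv⟩]
  exact Finset.inf'_le _ hv

lemma le_gset_false {S : Finset V} {v : V} (hv : v ∈ (univ : Finset V) \ S) :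
    max (hc G S v) (gset G true (insert v S)) ≤ gset G false S := by
  rw [gset_false G ⟨v, hv⟩]
  exact Finset.le_sup' (fun v => max (hc G S v) (gset G true (insert v S))) hv

lemma opt {S : Finset V} {v : V} (hv : v ∈ (univ : Finset V) \ S) :
    gset G true (insert v S) ≤ gset G false S :=
  le_trans (le_max_right _ _) (le_gset_false G hv)

lemma sdiff_insert_eq (v : V) (S : Finset V) :
    (univ : Finset V) \ insert v S = ((univ : Finset V) \ S).erase v := by
  ext x; simp only [mem_sdiff, mem_erase, mem_insert, mem_univ, true_and]; tauto

lemma card_sdiff_insert {v : V} {S : Finset V} (hv : v ∈ (univ : Finset V) \ S) :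
    ((univ : Finset V) \ insert v S).card + 1 = ((univ : Finset V) \ S).card := by
  rw [sdiff_insert_eq]
  exact Finset.card_erase_add_one hv

/-- Lemma 0 : `hc S w ≤ gset b S` for `w ∉ S`. -/
lemma hc_le_gset_aux :
    ∀ (n : ℕ) (S : Finset V) (b : Bool) (w : V), w ∈ (univ : Finset V) \ S →
      ((univ : Finset V) \ S).card ≤ n → hc G S w ≤ gset G b S := by
  intro n
  induction n with
  | zero =>
    intro S b w hw hcard
    exact absurd (Finset.card_pos.mpr ⟨w, hw⟩) (by omega)
  | succ n ih =>
    intro S b w hw hcard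
    have hne : ((univ : Finset V) \ S).Nonempty := ⟨w, hw⟩
    cases b with
    | false =>
      exact le_trans (le_max_left _ _) (le_gset_false G hw)
    | true =>
      rw [gset_true G hne]
      apply Finset.le_inf'
      intro v hv
      by_cases hvw : v = w
      · subst hvw; exact le_max_left _ _
      · refine le_trans ?_ (le_max_right _ _)
        have hw' : w ∈ (univ : Finset V) \ insert v S := by
          simp only [mem_sdiff, mem_insert, mem_univ, true_and] at hw ⊢
          exact fun h => by rcases h with h | h; exact hvw h.symm; exact hw h
        have hcard' : ((univ : Finset V) \ insert v S).card ≤ n := by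
          have := card_sdiff_insert (v := v) (S := S) hv; omega
        exact le_trans (hc_mono G (Finset.subset_insert _ _) w) (ih _ false w hw' hcard')

lemma hc_le_gset {S : Finset V} (b : Bool) {w : V} (hw : w ∈ (univ : Finset V) \ S) :
    hc G S w ≤ gset G b S :=
  hc_le_gset_aux G _ S b w hw le_rfl

/-- the complement of `S` is `{v}` when `insert v S = univ`. -/
lemma hc_of_insert_univ {S : Finset V} {v : V} (hv : v ∉ S)
    (h : ¬ ((univ : Finset V) \ insert v S).Nonempty) : hc G S v = 1 + deg G v := by
  have hS : S = (univ : Finset V).erase v := by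
    have h' : (univ : Finset V) \ insert v S = ∅ := Finset.not_nonempty_iff_eq_empty.mp h
    have hsub : (univ : Finset V) ⊆ insert v S := by
      intro x _
      by_contra hx
      have : x ∈ (univ : Finset V) \ insert v S :=
        Finset.mem_sdiff.mpr ⟨Finset.mem_univ _, hx⟩
      rw [h'] at this; simp at this
    ext x
    simp only [mem_erase, mem_univ, and_true]
    constructor
    · intro hx
      exact fun he => hv (he ▸ hx)
    · intro hxv
      rcases Finset.mem_insert.mp (hsub (Finset.mem_univ x)) with h | h
      · exact absurd h hxv
      · exact h
  rw [hS]; exact hc_erase_self G v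

/-- Lemma 1 : min of `1 + deg` over unplayed vertices is a lower bound for the value. -/
lemma min_deg_le_gset_aux :
    ∀ (n : ℕ) (S : Finset V) (b : Bool) (h : ((univ : Finset V) \ S).Nonempty),
      ((univ : Finset V) \ S).card ≤ n →
      ((univ : Finset V) \ S).inf' h (fun z => 1 + deg G z) ≤ gset G b S := by
  intro n
  induction n with
  | zero =>
    intro S b h hcard
    exact absurd (Finset.card_pos.mpr h) (by omega)
  | succ n ih =>
    intro S b h hcard
    have key : ∀ v ∈ (univ : Finset V) \ S,
        ((univ : Finset V) \ S).inf' h (fun z => 1 + deg G z) ≤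
          max (hc G S v) (gset G (!b) (insert v S)) := by
      intro v hv
      by_cases hne2 : ((univ : Finset V) \ insert v S).Nonempty
      · refine le_trans ?_ (le_max_right _ _)
        have hcard' : ((univ : Finset V) \ insert v S).card ≤ n := by
          have := card_sdiff_insert hv; omega
        refine le_trans ?_ (ih _ (!b) hne2 hcard')
        apply Finset.le_inf'
        intro x hx
        apply Finset.inf'_le
        have hsub : (univ : Finset V) \ insert v S ⊆ (univ : Finset V) \ S := by
          intro u hu
          simp only [mem_sdiff, mem_insert, mem_univ, true_and] at hu ⊢
          exact fun h' => hu (Or.inr h')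
        exact hsub hx
      · have hvS : v ∉ S := by
          simp only [mem_sdiff, mem_univ, true_and] at hv; exact hv
        have : hc G S v = 1 + deg G v := hc_of_insert_univ G hvS hne2
        refine le_trans ?_ (le_max_left _ _)
        rw [this]
        exact Finset.inf'_le _ hv
    cases b with
    | true =>
      rw [gset_true G h]
      exact Finset.le_inf' _ _ (fun v hv => key v hv)
    | false =>
      obtain ⟨v0, hv0⟩ := h
      refine le_trans (key v0 hv0) (le_gset_false G hv0)

lemma min_deg_le_gset {S : Finset V} (b : Bool) (h : ((univ : Finset V) \ S).Nonempty) :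
    ((univ : Finset V) \ S).inf' h (fun z => 1 + deg G z) ≤ gset G b S :=
  min_deg_le_gset_aux G _ S b h le_rfl

/-- Lemma 2 (P') and MAIN combined:
P' : `A(S) ≤ max (1+deg g0) (A(S ∪ g0))`, MAIN : `A(S) ≤ B(S)`. -/
lemma mainAux :
    ∀ (n : ℕ) (S : Finset V), ((univ : Finset V) \ S).card ≤ n →
      (∀ g0, g0 ∉ S → gset G true S ≤ max (1 + deg G g0) (gset G true (insert g0 S)))
      ∧ gset G true S ≤ gset G false S := by
  intro n
  induction n with
  | zero =>
    intro S hcard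
    have hemp : ¬ ((univ : Finset V) \ S).Nonempty := by
      intro h; exact absurd (Finset.card_pos.mpr h) (by omega)
    rw [gset_of_empty G hemp, gset_of_empty G hemp]
    exact ⟨fun _ _ => Nat.zero_le _, le_rfl⟩
  | succ n ih =>
    intro S hcard
    by_cases hne : ((univ : Finset V) \ S).Nonempty
    swap
    · rw [gset_of_empty G hne, gset_of_empty G hne]
      exact ⟨fun _ _ => Nat.zero_le _, le_rfl⟩
    have hP : ∀ g0, g0 ∉ S → gset G true S ≤ max (1 + deg G g0) (gset G true (insert g0 S)) := by
      intro g0 hg0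
      have hg0' : g0 ∈ (univ : Finset V) \ S := Finset.mem_sdiff.mpr ⟨Finset.mem_univ _, hg0⟩
      by_cases hne2 : ((univ : Finset V) \ insert g0 S).Nonempty
      swap
      · -- `insert g0 S = univ` : only one move available
        have h1 : gset G true S ≤ max (hc G S g0) (gset G false (insert g0 S)) :=
          gset_true_le G hg0'
        have h2 : gset G false (insert g0 S) = 0 := gset_of_empty G hne2 _
        have h3 : hc G S g0 = 1 + deg G g0 := hc_of_insert_univ G hg0 hne2
        rw [h2, h3] at h1
        exact le_trans h1 (by simp)
      · -- main sub-case
        obtain ⟨y0, hy0mem, hy0⟩ := Finset.exists_mem_eq_inf' hne2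
          (fun y => max (hc G (insert g0 S) y) (gset G false (insert y (insert g0 S))))
        have hA' : gset G true (insert g0 S) =
            max (hc G (insert g0 S) y0) (gset G false (insert y0 (insert g0 S))) := by
          rw [gset_true G hne2]; exact hy0
        have hy0g0 : y0 ≠ g0 := by
          intro h
          have := Finset.mem_sdiff.mp hy0mem
          exact this.2 (h ▸ Finset.mem_insert_self _ _)
        have hy0S : y0 ∉ S := by
          have := (Finset.mem_sdiff.mp hy0mem).2
          exact fun h => this (Finset.mem_insert_of_mem h)
        have hy0S' : y0 ∈ (univ : Finset V) \ S := Finset.mem_sdiff.mpr ⟨Finset.mem_univ _, hy0S⟩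
        -- cards
        have hc1 : ((univ : Finset V) \ insert g0 S).card + 1 = ((univ : Finset V) \ S).card :=
          card_sdiff_insert hg0'
        have hy0T : y0 ∈ (univ : Finset V) \ insert g0 S := hy0mem
        have hc2 : ((univ : Finset V) \ insert y0 (insert g0 S)).card + 1
            = ((univ : Finset V) \ insert g0 S).card := card_sdiff_insert hy0T
        -- step 1 : Alice plays y0 at S
        have step1 : gset G true S ≤ max (hc G S y0) (gset G false (insert y0 S)) :=
          gset_true_le G hy0S'
        -- bound the first component
        have b1 : hc G S y0 ≤ gset G true (insert g0 S) := by
          rw [hA']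
          exact le_trans (hc_mono G (Finset.subset_insert _ _) y0) (le_max_left _ _)
        -- key fact : B(insert y0 (insert g0 S)) ≤ A(insert g0 S)
        have bKey : gset G false (insert y0 (insert g0 S)) ≤ gset G true (insert g0 S) := by
          rw [hA']; exact le_max_right _ _
        -- bound the second component by sup'_le
        have hg0y : g0 ∈ (univ : Finset V) \ insert y0 S := by
          simp only [Finset.mem_sdiff, Finset.mem_insert, Finset.mem_univ, true_and]
          push_neg
          exact ⟨fun h => hy0g0 h.symm, hg0⟩
        have hne3 : ((univ : Finset V) \ insert y0 S).Nonempty := ⟨g0, hg0y⟩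
        have b2 : gset G false (insert y0 S) ≤
            max (1 + deg G g0) (gset G true (insert g0 S)) := by
          rw [gset_false G hne3]
          apply Finset.sup'_le
          intro b hb
          have hbS : b ∉ S := by
            have := (Finset.mem_sdiff.mp hb).2
            exact fun h => this (Finset.mem_insert_of_mem h)
          have hby0 : b ≠ y0 := by
            intro h
            exact (Finset.mem_sdiff.mp hb).2 (h ▸ Finset.mem_insert_self _ _)
          apply max_le
          · -- cost component
            by_cases hbg : b = g0
            · subst hbg
              exact le_trans (hc_le_deg G _ b) (le_max_left _ _)
            · have hbT : b ∈ (univ : Finset V) \ insert y0 (insert g0 S) := by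
                simp only [Finset.mem_sdiff, Finset.mem_insert, Finset.mem_univ, true_and]
                push_neg
                exact ⟨hby0, hbg, hbS⟩
              have : hc G (insert y0 S) b ≤ hc G (insert y0 (insert g0 S)) b :=
                hc_mono G (Finset.insert_subset_insert _ (Finset.subset_insert _ _)) b
              refine le_trans this (le_trans ?_ (le_max_right _ _))
              exact le_trans (hc_le_gset G false hbT) bKey
          · -- future component
            by_cases hbg : b = g0
            · subst hbg
              have hEq : insert b (insert y0 S) = insert y0 (insert b S) :=
                Finset.insert_comm _ _ _
              rw [hEq]
              have hcb : ((univ : Finset V) \ insert y0 (insert b S)).card ≤ n := by omega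
              have hmain := (ih _ hcb).2
              exact le_trans hmain (le_trans bKey (le_max_right _ _))
            · -- b ≠ g0 : use P' at the deeper position
              have hbT : b ∈ (univ : Finset V) \ insert y0 (insert g0 S) := by
                simp only [Finset.mem_sdiff, Finset.mem_insert, Finset.mem_univ, true_and]
                push_neg
                exact ⟨hby0, hbg, hbS⟩
              have hcb : ((univ : Finset V) \ insert b (insert y0 S)).card ≤ n := by
                have hbmem : b ∈ (univ : Finset V) \ insert y0 S := hb
                have := card_sdiff_insert hbmem
                have hy0mem2 : y0 ∈ (univ : Finset V) \ S := hy0S'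
                have := card_sdiff_insert hy0mem2
                omega
              have hg0nb : g0 ∉ insert b (insert y0 S) := by
                simp only [Finset.mem_insert]
                push_neg
                exact ⟨fun h => hbg h.symm, fun h => hy0g0 h.symm, hg0⟩
              have hP' := (ih _ hcb).1 g0 hg0nb
              refine le_trans hP' ?_
              apply max_le (le_max_left _ _)
              -- gset true (insert g0 (insert b (insert y0 S))) ≤ RHS
              have hEq : insert g0 (insert b (insert y0 S))
                  = insert b (insert y0 (insert g0 S)) := by
                rw [Finset.insert_comm g0 b, Finset.insert_comm g0 y0]
              rw [hEq]
              have : gset G true (insert b (insert y0 (insert g0 S)))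
                  ≤ gset G false (insert y0 (insert g0 S)) := opt G hbT
              exact le_trans this (le_trans bKey (le_max_right _ _))
        -- combine
        refine le_trans step1 (max_le ?_ ?_)
        · exact le_trans b1 (le_max_right _ _)
        · exact b2
    refine ⟨hP, ?_⟩
    -- MAIN : A(S) ≤ B(S)
    obtain ⟨z0, hz0mem, hz0⟩ := Finset.exists_mem_eq_inf' hne (fun z => 1 + deg G z)
    have hz0S : z0 ∉ S := (Finset.mem_sdiff.mp hz0mem).2
    have h1 := hP z0 hz0S
    have h2 : 1 + deg G z0 ≤ gset G false S := by
      rw [← hz0]; exact min_deg_le_gset G false hne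
    have h3 : gset G true (insert z0 S) ≤ gset G false S := opt G hz0mem
    exact le_trans h1 (max_le h2 h3)

lemma gset_true_le_false (S : Finset V) : gset G true S ≤ gset G false S :=
  (mainAux G _ S le_rfl).2

lemma gset_P' {S : Finset V} {g0 : V} (hg0 : g0 ∉ S) :
    gset G true S ≤ max (1 + deg G g0) (gset G true (insert g0 S)) :=
  (mainAux G _ S le_rfl).1 g0 hg0

/-- Lemmas (b) and (c) : adding a pre-placed vertex raises each value by at most 1. -/
lemma bcAux :
    ∀ (n : ℕ) (S : Finset V) (v : V), v ∉ S → ((univ : Finset V) \ S).card ≤ n →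
      (gset G true (insert v S) ≤ gset G true S + 1)
      ∧ (gset G false (insert v S) ≤ gset G false S + 1) := by
  intro n
  induction n with
  | zero =>
    intro S v hv hcard
    have : v ∈ (univ : Finset V) \ S := Finset.mem_sdiff.mpr ⟨Finset.mem_univ _, hv⟩
    exact absurd (Finset.card_pos.mpr ⟨v, this⟩) (by omega)
  | succ n ih =>
    intro S v hv hcard
    have hv' : v ∈ (univ : Finset V) \ S := Finset.mem_sdiff.mpr ⟨Finset.mem_univ _, hv⟩
    have hne : ((univ : Finset V) \ S).Nonempty := ⟨v, hv'⟩
    constructor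
    · -- (b) : A(insert v S) ≤ A(S) + 1
      by_cases hne2 : ((univ : Finset V) \ insert v S).Nonempty
      swap
      · rw [gset_of_empty G hne2]; exact Nat.zero_le _
      obtain ⟨u0, hu0mem, hu0⟩ := Finset.exists_mem_eq_inf' hne
        (fun u => max (hc G S u) (gset G false (insert u S)))
      have hAS : gset G true S = max (hc G S u0) (gset G false (insert u0 S)) := by
        rw [gset_true G hne]; exact hu0
      by_cases huv : u0 = v
      · subst huv
        have h1 : gset G true (insert u0 S) ≤ gset G false (insert u0 S) :=
          gset_true_le_false G _
        have h2 : gset G false (insert u0 S) ≤ gset G true S := by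
          rw [hAS]; exact le_max_right _ _
        exact le_trans h1 (le_trans h2 (Nat.le_succ _))
      · have hu0' : u0 ∈ (univ : Finset V) \ insert v S := by
          simp only [Finset.mem_sdiff, Finset.mem_insert, Finset.mem_univ, true_and]
          push_neg
          exact ⟨huv, (Finset.mem_sdiff.mp hu0mem).2⟩
        have step : gset G true (insert v S) ≤
            max (hc G (insert v S) u0) (gset G false (insert u0 (insert v S))) :=
          gset_true_le G hu0'
        refine le_trans step (max_le ?_ ?_)
        · have : hc G (insert v S) u0 ≤ hc G S u0 + 1 := hc_lip G S v u0
          have h2 : hc G S u0 ≤ gset G true S := by rw [hAS]; exact le_max_left _ _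
          omega
        · have hEq : insert u0 (insert v S) = insert v (insert u0 S) :=
            Finset.insert_comm _ _ _
          rw [hEq]
          have hvu0S : v ∉ insert u0 S := by
            simp only [Finset.mem_insert]
            push_neg
            exact ⟨fun h => huv h.symm, hv⟩
          have hcardu : ((univ : Finset V) \ insert u0 S).card ≤ n := by
            have := card_sdiff_insert hu0mem; omega
          have hc1 := (ih _ v hvu0S hcardu).2
          have h2 : gset G false (insert u0 S) ≤ gset G true S := by
            rw [hAS]; exact le_max_right _ _
          omega
    · -- (c) : B(insert v S) ≤ B(S) + 1
      by_cases hne2 : ((univ : Finset V) \ insert v S).Nonempty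
      swap
      · rw [gset_of_empty G hne2]; exact Nat.zero_le _
      rw [gset_false G hne2]
      apply Finset.sup'_le
      intro w hw
      have hwS : w ∉ S := by
        have := (Finset.mem_sdiff.mp hw).2
        exact fun h => this (Finset.mem_insert_of_mem h)
      have hwv : w ≠ v := by
        intro h
        exact (Finset.mem_sdiff.mp hw).2 (h ▸ Finset.mem_insert_self _ _)
      have hwS' : w ∈ (univ : Finset V) \ S := Finset.mem_sdiff.mpr ⟨Finset.mem_univ _, hwS⟩
      apply max_le
      · have h1 : hc G (insert v S) w ≤ hc G S w + 1 := hc_lip G S v w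
        have h2 : hc G S w ≤ gset G false S := hc_le_gset G false hwS'
        omega
      · have hEq : insert w (insert v S) = insert v (insert w S) :=
          Finset.insert_comm _ _ _
        rw [hEq]
        have hvwS : v ∉ insert w S := by
          simp only [Finset.mem_insert]
          push_neg
          exact ⟨fun h => hwv h.symm, hv⟩
        have hcardw : ((univ : Finset V) \ insert w S).card ≤ n := by
          have := card_sdiff_insert hwS'; omega
        have hb := (ih _ v hvwS hcardw).1
        have h2 : gset G true (insert w S) ≤ gset G false S := opt G hwS'
        omega

/-- B(S) ≤ A(S) + 1. -/
lemma gset_false_le_true (S : Finset V) : gset G false S ≤ gset G true S + 1 := by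
  by_cases hne : ((univ : Finset V) \ S).Nonempty
  swap
  · rw [gset_of_empty G hne]; exact Nat.zero_le _
  rw [gset_false G hne]
  apply Finset.sup'_le
  intro v hv
  apply max_le
  · exact le_trans (hc_le_gset G true hv) (Nat.le_succ _)
  · have hvS : v ∉ S := (Finset.mem_sdiff.mp hv).2
    exact (bcAux G _ S v hvS le_rfl).1

end GcolAux


namespace GcolAux2

set_option linter.unusedSectionVars false

open Finset

variable {V : Type*} [Fintype V] (G : SimpleGraph V)

lemma get_append_last (σ : List V) (v : V) :
    (σ ++ [v]).get ⟨σ.length, by simp⟩ = v := by simp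

lemma get_append_left (σ : List V) (v : V) (i : ℕ) (h : i < σ.length)
    (h2 : i < (σ ++ [v]).length) : (σ ++ [v]).get ⟨i, h2⟩ = σ.get ⟨i, h⟩ := by
  rw [List.get_eq_getElem, List.get_eq_getElem, List.getElem_append_left]

lemma backDeg_append_self (σ : List V) (v : V) (hv : v ∉ σ) :
    backDeg G (σ ++ [v]) v = (σ.toFinset.filter (fun u => G.Adj v u)).card := by
  unfold backDeg
  congr 1
  ext u
  simp only [Finset.mem_filter, Finset.mem_univ, true_and, List.mem_toFinset]
  constructor
  · rintro ⟨hadj, i, j, hij, hi, hj⟩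
    refine ⟨?_, hadj⟩
    have hjv : (j : ℕ) = σ.length := by
      by_contra hne
      have hj' : (j : ℕ) < σ.length := by
        have := j.isLt
        simp only [List.length_append, List.length_singleton] at this
        omega
      have hmem : (σ ++ [v]).get j ∈ σ := by
        have heq : (σ ++ [v]).get j = σ.get ⟨(j : ℕ), hj'⟩ := by
          simpa using get_append_left σ v (j : ℕ) hj' j.isLt
        rw [heq]
        exact σ.get_mem _
      rw [hj] at hmem
      exact hv hmem
    have hij' : (i : ℕ) < σ.length := by
      have : (i : ℕ) < (j : ℕ) := hij
      omega
    have heq : σ.get ⟨(i : ℕ), hij'⟩ = u := by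
      rw [← hi]
      exact (get_append_left σ v (i : ℕ) hij' i.isLt).symm
    rw [← heq]
    exact σ.get_mem _
  · rintro ⟨hu, hadj⟩
    obtain ⟨i0, hi0⟩ := List.mem_iff_get.mp hu
    have hlen : (σ ++ [v]).length = σ.length + 1 := by simp
    refine ⟨hadj, ⟨(i0 : ℕ), by omega⟩, ⟨σ.length, by omega⟩, ?_, ?_, ?_⟩
    · exact i0.isLt
    · rw [get_append_left σ v (i0 : ℕ) i0.isLt]
      · exact hi0
    · simpa using get_append_last σ v

lemma backDeg_append_ne (σ : List V) (v w : V) (hw : w ≠ v) :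
    backDeg G (σ ++ [v]) w = backDeg G σ w := by
  unfold backDeg
  congr 1
  ext u
  simp only [Finset.mem_filter, Finset.mem_univ, true_and]
  constructor
  · rintro ⟨hadj, i, j, hij, hi, hj⟩
    refine ⟨hadj, ?_⟩
    have hj' : (j : ℕ) < σ.length := by
      by_contra hne
      have hjlen : (j : ℕ) = σ.length := by
        have := j.isLt
        simp only [List.length_append, List.length_singleton] at this
        omega
      have : (σ ++ [v]).get j = v := by
        have heq : j = ⟨σ.length, by simp⟩ := Fin.ext hjlen
        rw [heq]
        exact get_append_last σ v
      rw [hj] at this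
      exact hw this
    have hi' : (i : ℕ) < σ.length := by
      have : (i : ℕ) < (j : ℕ) := hij
      omega
    refine ⟨⟨(i : ℕ), hi'⟩, ⟨(j : ℕ), hj'⟩, ?_, ?_, ?_⟩
    · exact hij
    · rw [← hi]
      exact (get_append_left σ v (i : ℕ) hi' i.isLt).symm
    · rw [← hj]
      exact (get_append_left σ v (j : ℕ) hj' j.isLt).symm
  · rintro ⟨hadj, i, j, hij, hi, hj⟩
    have hlen : (σ ++ [v]).length = σ.length + 1 := by simp
    refine ⟨hadj, ⟨(i : ℕ), by omega⟩, ⟨(j : ℕ), by omega⟩, ?_, ?_, ?_⟩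
    · exact hij
    · rw [get_append_left σ v (i : ℕ) i.isLt]
      exact hi
    · rw [get_append_left σ v (j : ℕ) j.isLt]
      exact hj

lemma backDeg_not_mem (σ : List V) (v : V) (hv : v ∉ σ) : backDeg G σ v = 0 := by
  unfold backDeg
  rw [Finset.card_eq_zero]
  rw [Finset.filter_eq_empty_iff]
  rintro u - ⟨-, i, j, -, -, hj⟩
  exact hv (hj ▸ σ.get_mem _)

lemma colOrd_le_iff (τ : List V) (m : ℕ) :
    colOrd G τ ≤ m ↔ ∀ w : V, 1 + backDeg G τ w ≤ m := by
  unfold colOrd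
  constructor
  · intro h w
    exact le_trans (Finset.le_sup (f := fun w => 1 + backDeg G τ w) (Finset.mem_univ w)) h
  · intro h
    exact Finset.sup_le (fun w _ => h w)

lemma le_colOrd (τ : List V) (w : V) : 1 + backDeg G τ w ≤ colOrd G τ :=
  Finset.le_sup (f := fun w => 1 + backDeg G τ w) (Finset.mem_univ w)

lemma colOrd_append (σ : List V) (v : V) (hv : v ∉ σ) :
    colOrd G (σ ++ [v]) =
      max (colOrd G σ) (1 + (σ.toFinset.filter (fun u => G.Adj v u)).card) := by
  apply le_antisymm
  · rw [colOrd_le_iff]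
    intro w
    by_cases hwv : w = v
    · rw [hwv, backDeg_append_self G σ v hv]
      exact le_max_right _ _
    · rw [backDeg_append_ne G σ v w hwv]
      exact le_trans (le_colOrd G σ w) (le_max_left _ _)
  · apply max_le
    · rw [colOrd_le_iff]
      intro w
      by_cases hwv : w = v
      · rw [hwv, backDeg_not_mem G σ v hv]
        have h1 : 1 + backDeg G (σ ++ [v]) v ≤ colOrd G (σ ++ [v]) := le_colOrd G _ v
        omega
      · rw [← backDeg_append_ne G σ v w hwv]
        exact le_colOrd G _ w
    · rw [← backDeg_append_self G σ v hv]
      exact le_colOrd G _ v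

lemma toFinset_append_singleton (σ : List V) (v : V) :
    (σ ++ [v]).toFinset = insert v σ.toFinset := by
  ext x
  simp only [List.mem_toFinset, List.mem_append, List.mem_singleton, Finset.mem_insert]
  tauto

lemma filter_not_mem_eq (σ : List V) :
    (univ : Finset V).filter (fun v => v ∉ σ) = (univ : Finset V) \ σ.toFinset := by
  ext x
  simp [List.mem_toFinset]

end GcolAux2



namespace GcolAux

lemma inf'_max_const {V : Type*} (s : Finset V) (H : s.Nonempty) (c : ℕ) (f : V → ℕ) :
    s.inf' H (fun x => max c (f x)) = max c (s.inf' H f) := by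
  apply le_antisymm
  · obtain ⟨b, hb, hfb⟩ := Finset.exists_mem_eq_inf' H f
    calc s.inf' H (fun x => max c (f x)) ≤ max c (f b) := Finset.inf'_le _ hb
    _ = max c (s.inf' H f) := by rw [hfb]
  · exact Finset.le_inf' _ _ (fun b hb => max_le_max le_rfl (Finset.inf'_le _ hb))

lemma sup'_max_const {V : Type*} (s : Finset V) (H : s.Nonempty) (c : ℕ) (f : V → ℕ) :
    s.sup' H (fun x => max c (f x)) = max c (s.sup' H f) := by
  apply le_antisymm
  · exact Finset.sup'_le _ _ (fun b hb => max_le_max le_rfl (Finset.le_sup' _ hb))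
  · apply max_le
    · obtain ⟨b, hb⟩ := H
      exact le_trans (le_max_left c (f b)) (Finset.le_sup' (fun x => max c (f x)) hb)
    · exact Finset.sup'_le _ _
        (fun b hb => le_trans (le_max_right c (f b)) (Finset.le_sup' (fun x => max c (f x)) hb))

end GcolAux

namespace GcolAux2

set_option linter.unusedSectionVars false

open Finset GcolAux

variable {V : Type*} [Fintype V] (G : SimpleGraph V)

lemma gameVal_eq :
    ∀ (n : ℕ) (σ : List V) (b : Bool), ((univ : Finset V) \ σ.toFinset).card ≤ n →
      gameVal G b σ = max (colOrd G σ) (gset G b σ.toFinset) := by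
  intro n
  induction n with
  | zero =>
    intro σ b hcard
    have hemp : ¬ ((univ : Finset V) \ σ.toFinset).Nonempty := by
      intro h; exact absurd (Finset.card_pos.mpr h) (by omega)
    have hempF : ¬ ((univ : Finset V).filter (fun v => v ∉ σ)).Nonempty := by
      rw [filter_not_mem_eq]; exact hemp
    rw [gameVal.eq_def, dif_neg hempF, gset_of_empty G hemp b]
    simp
  | succ n ih =>
    intro σ b hcard
    by_cases hne : ((univ : Finset V) \ σ.toFinset).Nonempty
    swap
    · have hempF : ¬ ((univ : Finset V).filter (fun v => v ∉ σ)).Nonempty := by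
        rw [filter_not_mem_eq]; exact hne
      rw [gameVal.eq_def, dif_neg hempF, gset_of_empty G hne b]
      simp
    have hneF : ((univ : Finset V).filter (fun v => v ∉ σ)).Nonempty := by
      rw [filter_not_mem_eq]; exact hne
    have key : ∀ v ∈ (univ : Finset V).filter (fun v => v ∉ σ), ∀ b' : Bool,
        gameVal G b' (σ ++ [v]) =
          max (colOrd G σ) (max (hc G σ.toFinset v) (gset G b' (insert v σ.toFinset))) := by
      intro v hv b'
      have hvσ : v ∉ σ := (Finset.mem_filter.mp hv).2
      have hvT : v ∈ (univ : Finset V) \ σ.toFinset := by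
        rw [← filter_not_mem_eq]; exact hv
      have hcard' : ((univ : Finset V) \ (σ ++ [v]).toFinset).card ≤ n := by
        rw [toFinset_append_singleton]
        have := card_sdiff_insert hvT
        omega
      rw [ih (σ ++ [v]) b' hcard', colOrd_append G σ v hvσ, toFinset_append_singleton]
      have : hc G σ.toFinset v = 1 + (σ.toFinset.filter (fun u => G.Adj v u)).card := rfl
      rw [← this, max_assoc]
    rw [gameVal.eq_def, dif_pos hneF]
    cases b with
    | true =>
      simp only [if_true]
      rw [attach_inf' ((univ : Finset V).filter (fun v => v ∉ σ)) hneF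
        (fun u => gameVal G false (σ ++ [u]))]
      rw [Finset.inf'_congr hneF (filter_not_mem_eq σ) (fun a ha => key a ha false)]
      rw [inf'_max_const _ hne (colOrd G σ)
        (fun v => max (hc G σ.toFinset v) (gset G false (insert v σ.toFinset)))]
      rw [← gset_true G hne]
    | false =>
      simp only [Bool.false_eq_true, if_false]
      rw [attach_sup' ((univ : Finset V).filter (fun v => v ∉ σ)) hneF
        (fun u => gameVal G true (σ ++ [u]))]
      rw [Finset.sup'_congr hneF (filter_not_mem_eq σ) (fun a ha => key a ha true)]
      rw [sup'_max_const _ hne (colOrd G σ)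
        (fun v => max (hc G σ.toFinset v) (gset G true (insert v σ.toFinset)))]
      rw [← gset_false G hne]

end GcolAux2


/-- If `gcol_A(G) = s`, then `s ≤ gcol_B(G) ≤ s + 1`: the value
of the Bob ordering game on `G` is never smaller than that of the (Alice)
ordering game, and exceeds it by at most one. -/
theorem gcolB_between {V : Type*} [Fintype V] (G : SimpleGraph V) (s : ℕ)
    (hs : gcol G = s) :
    s ≤ gcolB G ∧ gcolB G ≤ s + 1 := by
  have hA : gcol G = max (colOrd G ([] : List V)) (GcolAux.gset G true (∅ : Finset V)) := by
    have := GcolAux2.gameVal_eq G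
      ((Finset.univ \ ([] : List V).toFinset).card) [] true le_rfl
    simpa [gcol, List.toFinset_nil] using this
  have hB : gcolB G = max (colOrd G ([] : List V)) (GcolAux.gset G false (∅ : Finset V)) := by
    have := GcolAux2.gameVal_eq G
      ((Finset.univ \ ([] : List V).toFinset).card) [] false le_rfl
    simpa [gcolB, List.toFinset_nil] using this
  have h1 : GcolAux.gset G true (∅ : Finset V) ≤ GcolAux.gset G false (∅ : Finset V) :=
    GcolAux.gset_true_le_false G ∅
  have h2 : GcolAux.gset G false (∅ : Finset V) ≤ GcolAux.gset G true (∅ : Finset V) + 1 :=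
    GcolAux.gset_false_le_true G ∅
  subst hs
  rw [hA, hB]
  constructor
  · exact max_le_max le_rfl h1
  · apply max_le
    · exact le_trans (le_max_left _ _) (Nat.le_succ _)
    · exact le_trans h2 (by omega)
end
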